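/- arXiv:2011.00434 — 6 statements merged into one kernel-verified Lean document; each statement's English description precedes it below -/
import Mathlib

section
/- Let 0 < m ≤ n be integers and let B be an m × n matrix with entries in 𝔽q[t] whose rank (over the fraction field 𝔽q(t)) equals m and such that m < n. Then there exist n − m vectors x₁, …, x_{n−m} ∈ (𝔽q[t])ⁿ that are linearly independent over 𝔽q[t], satisfy B·xᵢᵀ = 0 for each i, and satisfy deg_t(xᵢ) ≤ m · deg_t(B) for each i. -/
/-!
Thunder's theorem is not needed; Cramer's rule already gives the bound. Since `B` has rank `m`
over `𝔽q(t)`, some `m` columns of `B` form a minor `M` with `det M ≠ 0`. For each of the other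
`n - m` columns `c`, the vector with entry `det M` at `c`, entries `-cramer M (B.col c)` on the
columns of `M` and `0` elsewhere lies in the kernel of `B`. Its entries are `m × m` minors of `B`,
of degree at most `m · deg_t B`, and its restriction to the columns outside `M` is `det M` times a
standard basis vector, so these `n - m` vectors are linearly independent.
-/

open Matrix Polynomial

theorem Function.Injective.exists_fin_injective_compl {α β : Type*} [Fintype α] [Fintype β]
    {e : α → β} (he : Function.Injective e) {k : ℕ} (hk : Fintype.card β - Fintype.card α = k) :
    ∃ c : Fin k → β, Function.Injective c ∧ ∀ j i, c j ≠ e i := by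
  classical
  let s : Finset β := (Finset.univ.image e)ᶜ
  have hs : s.card = k := by
    rw [Finset.card_compl, Finset.card_image_of_injective _ he, Finset.card_univ, hk]
  let σ := (s.equivFinOfCardEq hs).symm
  refine ⟨fun j => σ j, Subtype.val_injective.comp σ.injective, fun j i hji => ?_⟩
  exact Finset.mem_compl.mp (σ j).2 (Finset.mem_image.mpr ⟨i, Finset.mem_univ i, hji.symm⟩)

theorem linearIndependent_of_apply_eq_single {R ι κ : Type*} [Ring R] [IsDomain R]
    [DecidableEq κ] {x : κ → ι → R} (c : κ → ι) {a : R} (ha : a ≠ 0)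
    (hx : ∀ i j, x i (c j) = (Pi.single i a : κ → R) j) : LinearIndependent R x := by
  refine LinearIndependent.of_comp (LinearMap.funLeft R R c) ?_
  convert Pi.linearIndependent_single_of_ne_zero (R := R) fun _ : κ => ha using 1
  ext i j
  exact hx i j

namespace Polynomial

variable {R ι : Type*} [CommRing R] [Fintype ι] [DecidableEq ι]

theorem natDegree_single_apply_le {β : Type*} [DecidableEq β] (j : β) (p : R[X]) (k : β) :
    ((Pi.single j p : β → R[X]) k).natDegree ≤ p.natDegree := by
  rw [Pi.single_apply]
  split_ifs <;> simp

theorem natDegree_det_le (M : Matrix ι ι R[X]) {d : ℕ} (h : ∀ i j, (M i j).natDegree ≤ d) :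
    M.det.natDegree ≤ Fintype.card ι * d := by
  rw [det_apply']
  refine natDegree_sum_le_of_forall_le _ _ fun σ _ => natDegree_mul_le.trans ?_
  rw [natDegree_intCast, zero_add]
  refine (natDegree_prod_le _ _).trans ?_
  exact (Finset.sum_le_card_nsmul _ _ _ fun i _ => h (σ i) i).trans_eq (by simp)

theorem natDegree_cramer_le (M : Matrix ι ι R[X]) (b : ι → R[X]) {d : ℕ}
    (hM : ∀ i j, (M i j).natDegree ≤ d) (hb : ∀ i, (b i).natDegree ≤ d) (i : ι) :
    (cramer M b i).natDegree ≤ Fintype.card ι * d := by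
  rw [cramer_apply]
  refine natDegree_det_le _ fun k j => ?_
  rw [updateCol_apply]
  split_ifs
  exacts [hb k, hM k j]

end Polynomial

namespace Matrix

theorem exists_submatrix_det_ne_zero_of_rank_eq {K m n : Type*} [Field K] [Fintype m]
    [DecidableEq m] [Fintype n] (A : Matrix m n K) (h : A.rank = Fintype.card m) :
    ∃ e : m → n, Function.Injective e ∧ (A.submatrix id e).det ≠ 0 := by
  obtain ⟨κ, a, ha, hspan, hli⟩ := exists_linearIndependent' K A.col
  have : Fintype κ := Fintype.ofInjective a ha
  have hcard : Fintype.card κ = Fintype.card m := by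
    rw [← finrank_span_eq_card hli, hspan, ← rank_eq_finrank_span_cols, h]
  let σ := (Fintype.equivOfCardEq hcard).symm
  refine ⟨a ∘ σ, ha.comp σ.injective, ?_⟩
  have hcols : LinearIndependent K (A.submatrix id (a ∘ σ)).col := hli.comp σ σ.injective
  exact ((isUnit_iff_isUnit_det _).mp (linearIndependent_cols_iff_isUnit.mp hcols)).ne_zero

theorem exists_submatrix_det_ne_zero_of_rank_map_eq {R K m n : Type*} [CommRing R] [Field K]
    [Fintype m] [DecidableEq m] [Fintype n] (f : R →+* K) (B : Matrix m n R)
    (h : (B.map f).rank = Fintype.card m) :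
    ∃ e : m → n, Function.Injective e ∧ (B.submatrix id e).det ≠ 0 := by
  obtain ⟨e, he, hdet⟩ := exists_submatrix_det_ne_zero_of_rank_eq _ h
  refine ⟨e, he, fun h0 => hdet ?_⟩
  rw [submatrix_map, ← RingHom.mapMatrix_apply, ← RingHom.map_det, h0, map_zero]

theorem mulVec_sum_single {R m n k : Type*} [CommRing R] [Fintype n] [DecidableEq n]
    [Fintype k] (B : Matrix m n R) (e : k → n) (y : k → R) :
    B *ᵥ ∑ i, Pi.single (e i) (y i) = B.submatrix id e *ᵥ y := by
  rw [mulVec_sum]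
  ext r
  simp [mulVec_single, mulVec, dotProduct, mul_comm]

variable {R m n : Type*} [CommRing R] [Fintype m] [DecidableEq m] [DecidableEq n]

def cramerKernelVector (B : Matrix m n R) (e : m → n) (c : n) : n → R :=
  Pi.single c (B.submatrix id e).det -
    ∑ i, Pi.single (e i) (cramer (B.submatrix id e) (B.col c) i)

theorem mulVec_cramerKernelVector [Fintype n] (B : Matrix m n R) (e : m → n) (c : n) :
    B *ᵥ cramerKernelVector B e c = 0 := by
  rw [cramerKernelVector, mulVec_sub, mulVec_sum_single, mulVec_cramer, sub_eq_zero]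
  ext r
  simp [mulVec_single, mul_comm]

theorem cramerKernelVector_apply_of_forall_ne (B : Matrix m n R) (e : m → n) (c : n) {k : n}
    (hk : ∀ i, e i ≠ k) :
    cramerKernelVector B e c k = (Pi.single c (B.submatrix id e).det : n → R) k := by
  simp [cramerKernelVector, Finset.sum_apply, Pi.single_apply, hk]

theorem natDegree_cramerKernelVector_le [Fintype n] {S : Type*} [CommRing S]
    (B : Matrix m n S[X]) {d : ℕ} (hB : ∀ i j, (B i j).natDegree ≤ d) (e : m → n) (c k : n) :
    (cramerKernelVector B e c k).natDegree ≤ Fintype.card m * d := by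
  have hdet := natDegree_det_le (B.submatrix id e) fun i j => hB i (e j)
  rw [cramerKernelVector, Pi.sub_apply, Finset.sum_apply]
  refine (natDegree_sub_le _ _).trans (max_le ((natDegree_single_apply_le _ _ _).trans hdet) ?_)
  refine natDegree_sum_le_of_forall_le _ _ fun i _ => (natDegree_single_apply_le _ _ _).trans ?_
  exact natDegree_cramer_le _ _ (fun i j => hB i (e j)) (fun i => hB i c) i

end Matrix

theorem siegel_lemma_function_field_general
    (Fq : Type*) [Field Fq]
    (m n : ℕ)
    (B : Matrix (Fin m) (Fin n) (Polynomial Fq))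
    (hrank : (B.map fun b => algebraMap (Polynomial Fq) (RatFunc Fq) b).rank = m) :
    ∃ x : Fin (n - m) → (Fin n → Polynomial Fq),
      LinearIndependent (Polynomial Fq) x ∧
      (∀ i, B.mulVec (x i) = 0) ∧
      (∀ i j, (x i j).natDegree ≤
        m * (Finset.univ.sup fun ij : Fin m × Fin n => (B ij.1 ij.2).natDegree)) := by
  set d := Finset.univ.sup fun ij : Fin m × Fin n => (B ij.1 ij.2).natDegree
  have hB : ∀ i j, (B i j).natDegree ≤ d := fun i j =>
    Finset.le_sup (f := fun ij : Fin m × Fin n => (B ij.1 ij.2).natDegree) (Finset.mem_univ (i, j))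
  obtain ⟨e, he, hdet⟩ :=
    exists_submatrix_det_ne_zero_of_rank_map_eq (algebraMap _ (RatFunc Fq)) B (by simpa using hrank)
  obtain ⟨c, hc, hce⟩ := he.exists_fin_injective_compl (k := n - m) (by simp)
  refine ⟨fun j => cramerKernelVector B e (c j),
    linearIndependent_of_apply_eq_single c hdet fun j j' => ?_,
    fun j => mulVec_cramerKernelVector B e (c j),
    fun j k => by simpa using natDegree_cramerKernelVector_le B hB e (c j) k⟩
  rw [cramerKernelVector_apply_of_forall_ne B e _ fun i => (hce j' i).symm]
  simp only [Pi.single_apply, hc.eq_iff]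

/-- **Siegel's lemma for function fields** (Corollary 2.4 of the paper).
Given an `m × n` matrix `B` over `𝔽q[t]` of full rank `m < n` (rank computed over
the fraction field `𝔽q(t)`), there are `n - m` vectors in `𝔽q[t]^n`, linearly
independent over `𝔽q[t]`, lying in the kernel of `B` and with degree at most
`m * deg_t B`. -/
theorem siegel_lemma_function_field
    (Fq : Type*) [Field Fq] [Fintype Fq]
    (m n : ℕ) (hm : 0 < m) (hmn : m < n)
    (B : Matrix (Fin m) (Fin n) (Polynomial Fq))
    (hrank : (B.map fun b => algebraMap (Polynomial Fq) (RatFunc Fq) b).rank = m) :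
    ∃ x : Fin (n - m) → (Fin n → Polynomial Fq),
      LinearIndependent (Polynomial Fq) x ∧
      (∀ i, B.mulVec (x i) = 0) ∧
      (∀ i j, (x i j).natDegree ≤
        m * (Finset.univ.sup fun ij : Fin m × Fin n => (B ij.1 ij.2).natDegree)) :=
  siegel_lemma_function_field_general Fq m n B hrank
end

section
/- Let ν ≥ 1 and let Λ₀ ⊆ Λ ⊆ (𝔽q[t])^ν be 𝔽q[t]-submodules, and suppose β₁, …, β_ν is a basis of Λ₀ as an 𝔽q[t]-module. Then Λ admits an 𝔽q[t]-basis γ₁, …, γ_ν such that for every 1 ≤ j ≤ ν one has deg_t(γ_j) ≤ max_{1 ≤ i ≤ j} deg_t(β_i). -/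
/-!
Let `Λₖ` be the vectors of `Λ` lying in the `𝔽q(t)`-span of `β₁, …, βₖ`. Then `Λₖ₋₁` is saturated
in `Λₖ` and `Λₖ / Λₖ₋₁` is a finitely generated torsion-free module of rank one over the PID
`𝔽q[t]`, hence generated by the class of a single `y`, and a basis of `Λₖ₋₁` extended by `y`
is a basis of `Λₖ`. Writing `βₖ ≡ f y` modulo `Λₖ₋₁ = ⟨γ₁, …, γₖ₋₁⟩`, reduce the coefficients of
`βₖ - f y` in the `γᵢ` modulo `f`; the corresponding adjustment of `y` gives
`f y = βₖ - ∑ sᵢ γᵢ` with `deg sᵢ < deg f`, which forces `deg y ≤ max_{i ≤ k} deg βᵢ`.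
-/

open Polynomial Submodule Module

namespace Submodule

variable {R M : Type*} [CommRing R] [AddCommGroup M] [Module R M]

def saturation (S : Submodule R M) : Submodule R M :=
  (torsion R (M ⧸ S)).comap S.mkQ

variable [IsDomain R] {S : Submodule R M} {x : M}

theorem mem_saturation : x ∈ S.saturation ↔ ∃ a ≠ (0 : R), a • x ∈ S := by
  simp [saturation, ← Quotient.mk_smul, Quotient.mk_eq_zero,
    mem_nonZeroDivisors_iff_ne_zero]

theorem le_saturation : S ≤ S.saturation :=
  fun x hx => mem_saturation.2 ⟨1, one_ne_zero, by rwa [one_smul]⟩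

theorem saturation_mono {T : Submodule R M} (h : S ≤ T) : S.saturation ≤ T.saturation :=
  fun x hx => by
    obtain ⟨a, ha, hax⟩ := mem_saturation.1 hx
    exact mem_saturation.2 ⟨a, ha, h hax⟩

theorem mem_saturation_of_smul_mem {a : R} (ha : a ≠ 0) (h : a • x ∈ S.saturation) :
    x ∈ S.saturation := by
  obtain ⟨b, hb, hbx⟩ := mem_saturation.1 h
  exact mem_saturation.2 ⟨b * a, mul_ne_zero hb ha, by rwa [mul_smul]⟩

theorem saturation_bot [IsTorsionFree R M] : (⊥ : Submodule R M).saturation = ⊥ :=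
  eq_bot_iff.2 fun x hx => by
    obtain ⟨a, ha, hax⟩ := mem_saturation.1 hx
    exact (smul_eq_zero.1 ((mem_bot R).1 hax)).resolve_left ha

theorem saturation_span_eq_top [Module.Finite R M] {n : ℕ} {β : Fin n → M}
    (hβ : LinearIndependent R β) (hn : finrank R M ≤ n) :
    (span R (Set.range β)).saturation = ⊤ := by
  refine eq_top_iff.2 fun v _ => ?_
  by_contra hv
  have hcons : LinearIndependent R (Fin.cons v β : Fin (n + 1) → M) := by
    refine .finCons' v β hβ fun c y hy hcy => ?_
    by_contra hc
    refine hv (mem_saturation.2 ⟨c, hc, ?_⟩)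
    rw [eq_neg_of_add_eq_zero_left hcy]
    exact neg_mem hy
  have := hcons.fintype_card_le_finrank
  simp only [Fintype.card_fin] at this
  omega

end Submodule

theorem Fin.image_setOf_val_lt_succ {α : Type*} {n : ℕ} (β : Fin n → α) (j : Fin n) :
    β '' {i | (i : ℕ) < j + 1} = insert (β j) (β '' {i | (i : ℕ) < j}) := by
  rw [← Set.image_insert_eq]
  congr 1
  ext i
  simp only [Set.mem_insert_iff, Fin.ext_iff]
  exact Nat.lt_succ_iff_lt_or_eq.trans or_comm

section Flag

variable {R M : Type*} [CommRing R] [AddCommGroup M] [Module R M]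

/-- `Λ ∩ Frac(R)⟨βᵢ : i < k⟩`: the saturation of an `R`-span is its `Frac R`-span intersected
with `M`. -/
def latticeFlag (Λ : Submodule R M) {n : ℕ} (β : Fin n → M) (k : ℕ) : Submodule R M :=
  Λ ⊓ (span R (β '' {i | (i : ℕ) < k})).saturation

variable {Λ : Submodule R M} {n : ℕ} {β : Fin n → M}

theorem latticeFlag_le {k : ℕ} : latticeFlag Λ β k ≤ Λ :=
  inf_le_left

variable [IsDomain R]

theorem latticeFlag_zero [IsTorsionFree R M] : latticeFlag Λ β 0 = ⊥ := by
  simp [latticeFlag, saturation_bot]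

theorem latticeFlag_eq_self (hβ : LinearIndependent R β) [Module.Finite R M]
    (hn : finrank R M ≤ n) : latticeFlag Λ β n = Λ := by
  simp [latticeFlag, Set.image_univ, saturation_span_eq_top hβ hn]

theorem latticeFlag_le_succ (k : ℕ) : latticeFlag Λ β k ≤ latticeFlag Λ β (k + 1) :=
  inf_le_inf_left Λ <| saturation_mono <| span_mono <| Set.image_mono fun _ hi =>
    Nat.lt_succ_of_lt hi

theorem mem_latticeFlag_of_smul_mem {k : ℕ} {a : R} {v : M} (ha : a ≠ 0) (hv : v ∈ Λ)
    (h : a • v ∈ latticeFlag Λ β k) : v ∈ latticeFlag Λ β k :=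
  ⟨hv, mem_saturation_of_smul_mem ha h.2⟩

theorem mem_latticeFlag_succ {j : Fin n} (hβΛ : β j ∈ Λ) : β j ∈ latticeFlag Λ β (j + 1) :=
  ⟨hβΛ, le_saturation <| subset_span <|
    (Fin.image_setOf_val_lt_succ β j).symm ▸ Set.mem_insert _ _⟩

theorem notMem_latticeFlag (hβ : LinearIndependent R β) (j : Fin n) :
    β j ∉ latticeFlag Λ β j := by
  rintro ⟨-, h⟩
  obtain ⟨a, ha, hab⟩ := mem_saturation.1 h
  refine ha (hβ.eq_zero_of_smul_mem_span j a (span_mono (Set.image_mono ?_) hab))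
  rintro i (hi : (i : ℕ) < j)
  exact ⟨Set.mem_univ i, fun h => hi.ne (congrArg Fin.val h)⟩

theorem exists_smul_sub_smul_mem_latticeFlag {j : Fin n} (hβΛ : β j ∈ Λ) {v : M}
    (hv : v ∈ latticeFlag Λ β (j + 1)) :
    ∃ a ≠ (0 : R), ∃ c : R, a • v - c • β j ∈ latticeFlag Λ β j := by
  obtain ⟨hvΛ, hvS⟩ := hv
  obtain ⟨a, ha, hav⟩ := mem_saturation.1 hvS
  rw [Fin.image_setOf_val_lt_succ, mem_span_insert] at hav
  obtain ⟨c, z, hz, hav⟩ := hav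
  refine ⟨a, ha, c, sub_mem (Λ.smul_mem a hvΛ) (Λ.smul_mem c hβΛ), le_saturation ?_⟩
  rwa [hav, add_sub_cancel_left]

end Flag

section PID

variable {R M : Type*} [CommRing R] [IsDomain R] [IsPrincipalIdealRing R]
  [AddCommGroup M] [Module R M]

theorem exists_generator_of_forall_dependent {Q : Type*} [AddCommGroup Q] [Module R Q]
    [Module.Finite R Q] [IsTorsionFree R Q] {u : Q} (hu : u ≠ 0)
    (hdep : ∀ x : Q, ∃ a ≠ (0 : R), ∃ c : R, a • x = c • u) :
    ∃ g : Q, (∀ c : R, c • g = 0 → c = 0) ∧ ∀ x : Q, ∃ c : R, c • g = x := by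
  let b := Free.chooseBasis R Q
  have : Subsingleton (Free.ChooseBasisIndex R Q) := by
    refine ⟨fun i i' => by_contra fun hii' => ?_⟩
    obtain ⟨a, ha, c, hac⟩ := hdep (b i)
    obtain ⟨a', ha', c', hac'⟩ := hdep (b i')
    obtain ⟨-, hca'⟩ := (LinearIndepOn.pair_iff b hii').1
      (b.linearIndependent.linearIndepOn _) (c' * a) (-(c * a'))
      (by simp only [mul_smul, hac, hac', neg_smul, smul_comm c' c u, add_neg_cancel])
    have hc : c = 0 := by simpa [ha'] using hca'
    refine b.ne_zero i ((smul_eq_zero.1 (hac.trans ?_)).resolve_left ha)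
    rw [hc, zero_smul]
  have : Nontrivial Q := nontrivial_of_ne u 0 hu
  obtain ⟨i⟩ := b.index_nonempty
  refine ⟨b i, fun c hc => (smul_eq_zero.1 hc).resolve_right (b.ne_zero i), fun x => ?_⟩
  exact ⟨b.repr x i, by rw [← Fintype.sum_subsingleton (fun j => b.repr x j • b j) i, b.sum_repr]⟩


theorem exists_generator_mod_of_forall_dependent {P N : Submodule R M} [Module.Finite R N]
    (hsat : ∀ a ≠ (0 : R), ∀ v ∈ N, a • v ∈ P → v ∈ P) {u : M} (huN : u ∈ N) (huP : u ∉ P)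
    (hdep : ∀ v ∈ N, ∃ a ≠ (0 : R), ∃ c : R, a • v - c • u ∈ P) :
    ∃ y ∈ N, (∀ c : R, c • y ∈ P → c = 0) ∧ ∀ v ∈ N, ∃ c : R, v - c • y ∈ P := by
  let P' := P.comap N.subtype
  have mk_eq_zero (v : N) : (Submodule.Quotient.mk v : N ⧸ P') = 0 ↔ (v : M) ∈ P :=
    Submodule.Quotient.mk_eq_zero P'
  have : IsTorsionFree R (N ⧸ P') := .of_smul_eq_zero fun a q => by
    obtain ⟨v, rfl⟩ := Submodule.Quotient.mk_surjective P' q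
    rw [← Submodule.Quotient.mk_smul, mk_eq_zero, mk_eq_zero, or_iff_not_imp_left]
    exact fun hav ha => hsat a ha v v.2 hav
  obtain ⟨g, hg, hgen⟩ := exists_generator_of_forall_dependent
    (u := Submodule.Quotient.mk (⟨u, huN⟩ : N)) (by rwa [Ne, mk_eq_zero]) fun q => by
      obtain ⟨v, rfl⟩ := Submodule.Quotient.mk_surjective P' q
      obtain ⟨a, ha, c, h⟩ := hdep v v.2
      refine ⟨a, ha, c, ?_⟩
      rwa [← Submodule.Quotient.mk_smul, ← Submodule.Quotient.mk_smul, Submodule.Quotient.eq]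
  obtain ⟨y, rfl⟩ := Submodule.Quotient.mk_surjective P' g
  refine ⟨y, y.2, fun c hc => hg c ((mk_eq_zero (c • y)).2 hc), fun v hv => ?_⟩
  obtain ⟨c, hc⟩ := hgen (Submodule.Quotient.mk ⟨v, hv⟩)
  rw [← Submodule.Quotient.mk_smul, Submodule.Quotient.eq, ← neg_mem_iff, neg_sub] at hc
  exact ⟨c, hc⟩

end PID

namespace Polynomial

theorem natDegree_mod_le_natDegree_sub_one {K : Type*} [Field K] (p : K[X]) {q : K[X]}
    (hq : q ≠ 0) : (p % q).natDegree ≤ q.natDegree - 1 := by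
  by_cases h : p % q = 0
  · simp [h]
  · have := natDegree_lt_natDegree h (degree_mod_lt p hq)
    omega

theorem natDegree_le_of_mul_eq_sub {R : Type*} [Ring R] [NoZeroDivisors R] {f p a b : R[X]}
    {M : ℕ} (hf : f ≠ 0) (h : f * p = a - b) (ha : a.natDegree ≤ M)
    (hb : b.natDegree ≤ f.natDegree - 1 + M) : p.natDegree ≤ M := by
  by_cases hp : p = 0
  · simp [hp]
  · have := natDegree_mul hf hp ▸ h ▸ natDegree_sub_le a b
    omega

end Polynomial

def supNatDegree {R κ : Type*} [Semiring R] [Fintype κ] (v : κ → R[X]) : ℕ :=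
  Finset.univ.sup fun c => (v c).natDegree

theorem supNatDegree_le_iff {R κ : Type*} [Semiring R] [Fintype κ] {v : κ → R[X]} {M : ℕ} :
    supNatDegree v ≤ M ↔ ∀ c, (v c).natDegree ≤ M := by
  simp [supNatDegree]

theorem exists_add_mem_span_supNatDegree_le {K ι κ : Type*} [Field K] [Fintype ι] [Fintype κ]
    {γ : ι → κ → K[X]} {M : ℕ} (hγ : ∀ i, supNatDegree (γ i) ≤ M) {u y : κ → K[X]}
    {f : K[X]} (hf : f ≠ 0) (hu : supNatDegree u ≤ M)
    (h : u - f • y ∈ span K[X] (Set.range γ)) :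
    ∃ z ∈ span K[X] (Set.range γ), supNatDegree (y + z) ≤ M := by
  obtain ⟨r, hr⟩ := (mem_span_range_iff_exists_fun K[X]).1 h
  refine ⟨∑ i, (r i / f) • γ i, sum_mem fun i _ => smul_mem _ _ (subset_span ⟨i, rfl⟩), ?_⟩
  have hdiv (i : ι) : r i = f * (r i / f) + r i % f := (EuclideanDomain.div_add_mod _ _).symm
  have key : f • (y + ∑ i, (r i / f) • γ i) = u - ∑ i, (r i % f) • γ i := by
    rw [smul_add, Finset.smul_sum, eq_sub_iff_add_eq, add_assoc, ← Finset.sum_add_distrib]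
    simp only [smul_smul, ← add_smul, ← hdiv, hr, add_sub_cancel]
  refine supNatDegree_le_iff.2 fun c => Polynomial.natDegree_le_of_mul_eq_sub hf
    (congrFun key c) (supNatDegree_le_iff.1 hu c) ?_
  rw [Finset.sum_apply]
  refine natDegree_sum_le_of_forall_le _ _ fun i _ => natDegree_mul_le.trans ?_
  exact add_le_add (Polynomial.natDegree_mod_le_natDegree_sub_one _ hf)
    (supNatDegree_le_iff.1 (hγ i) c)

theorem exists_basis_snoc_supNatDegree_le {K κ : Type*} [Field K] [Fintype κ]
    {P N : Submodule K[X] (κ → K[X])} (hPN : P ≤ N) {k M : ℕ} (γ : Basis (Fin k) K[X] P)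
    (hγ : ∀ i, supNatDegree (γ i : κ → K[X]) ≤ M)
    (hsat : ∀ a ≠ (0 : K[X]), ∀ v ∈ N, a • v ∈ P → v ∈ P) {u : κ → K[X]} (huN : u ∈ N)
    (huP : u ∉ P) (hdep : ∀ v ∈ N, ∃ a ≠ (0 : K[X]), ∃ c : K[X], a • v - c • u ∈ P)
    (hu : supNatDegree u ≤ M) :
    ∃ δ : Basis (Fin (k + 1)) K[X] N,
      (∀ i, (δ i.castSucc : κ → K[X]) = γ i) ∧ supNatDegree (δ (Fin.last k) : κ → K[X]) ≤ M := by
  obtain ⟨y, hyN, hli, hsp⟩ := exists_generator_mod_of_forall_dependent hsat huN huP hdep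
  obtain ⟨f, hf⟩ := hsp u huN
  have hf0 : f ≠ 0 := by
    rintro rfl
    exact huP (by simpa using hf)
  have hspan : span K[X] (Set.range fun i => (γ i : κ → K[X])) = P :=
    (span_range_subtype_eq_top_iff P fun i => (γ i).2).1 γ.span_eq
  obtain ⟨z, hz, hdeg⟩ := exists_add_mem_span_supNatDegree_le hγ hf0 hu (hspan ▸ hf)
  rw [hspan] at hz
  refine ⟨Basis.mkFinSnocOfLE γ hPN (y + z) (N.add_mem hyN (hPN hz)) (fun c x hx hcx => ?_)
    (fun v hv => ?_), fun i => by simp, by simpa using hdeg⟩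
  · refine hli c ?_
    rw [smul_add, add_assoc] at hcx
    rw [eq_neg_of_add_eq_zero_left hcx]
    exact P.neg_mem (P.add_mem (P.smul_mem c hz) hx)
  · obtain ⟨c, hc⟩ := hsp v hv
    refine ⟨-c, ?_⟩
    rw [show v + -c • (y + z) = (v - c • y) - c • z by module]
    exact P.sub_mem hc (P.smul_mem c hz)

theorem exists_basis_latticeFlag {K κ : Type*} [Field K] [Fintype κ]
    {Λ : Submodule K[X] (κ → K[X])} {n : ℕ} {β : Fin n → κ → K[X]}
    (hβ : LinearIndependent K[X] β) (hβΛ : ∀ i, β i ∈ Λ) (k : ℕ) (hk : k ≤ n) :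
    ∃ γ : Basis (Fin k) K[X] (latticeFlag Λ β k), ∀ i, supNatDegree (γ i : κ → K[X]) ≤
      (Finset.Iic (Fin.castLE hk i)).sup fun l => supNatDegree (β l) := by
  induction k with
  | zero =>
    have : Subsingleton (latticeFlag Λ β 0) := by
      rw [latticeFlag_zero]
      infer_instance
    exact ⟨Basis.empty _, finZeroElim⟩
  | succ k ih =>
    obtain ⟨γ, hγ⟩ := ih (by omega)
    let j : Fin n := ⟨k, hk⟩
    have hβN := mem_latticeFlag_succ (j := j) (hβΛ j)
    have hβP := notMem_latticeFlag (Λ := Λ) hβ j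
    obtain ⟨δ, hδγ, hδ⟩ := exists_basis_snoc_supNatDegree_le (latticeFlag_le_succ k) γ
      (fun i => (hγ i).trans (Finset.sup_mono (Finset.Iic_subset_Iic.2 (by simp [Fin.le_def, j]))))
      (fun a ha v hv => mem_latticeFlag_of_smul_mem ha (latticeFlag_le hv)) hβN hβP
      (fun v hv => exists_smul_sub_smul_mem_latticeFlag (j := j) (hβΛ j) hv)
      (Finset.le_sup (f := fun l => supNatDegree (β l)) (Finset.mem_Iic.2 le_rfl))
    refine ⟨δ, Fin.lastCases hδ fun i => ?_⟩
    rw [hδγ]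
    exact hγ i

theorem lattice_basis_bounded_degree_general
    (Fq : Type*) [Field Fq]
    (ν : ℕ)
    (Λ₀ Λ : Submodule (Polynomial Fq) (Fin ν → Polynomial Fq))
    (hsub : Λ₀ ≤ Λ)
    (β : Module.Basis (Fin ν) (Polynomial Fq) Λ₀) :
    ∃ γ : Module.Basis (Fin ν) (Polynomial Fq) Λ,
      ∀ j : Fin ν,
        (Finset.univ.sup fun c : Fin ν => (((γ j : Fin ν → Polynomial Fq)) c).natDegree) ≤
          (Finset.Iic j).sup
            (fun i => Finset.univ.sup fun c : Fin ν =>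
              (((β i : Fin ν → Polynomial Fq)) c).natDegree) := by
  have hβ : LinearIndependent Fq[X] fun i => (β i : Fin ν → Fq[X]) :=
    β.linearIndependent.map' Λ₀.subtype Λ₀.ker_subtype
  obtain ⟨γ, hγ⟩ := exists_basis_latticeFlag hβ (fun i => hsub (β i).2) ν le_rfl
  have hΛ : latticeFlag Λ (fun i => (β i : Fin ν → Fq[X])) ν = Λ :=
    latticeFlag_eq_self hβ (by simp)
  exact ⟨γ.map (LinearEquiv.ofEq _ _ hΛ), fun j => by simpa [supNatDegree] using hγ j⟩

/-- Lemma 2.8 of the paper (an `𝔽q[t]`-analogue of a lemma of Cassels).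
Given `𝔽q[t]`-submodules `Λ₀ ⊆ Λ ⊆ (𝔽q[t])^ν` and a basis `β₁, …, β_ν` of `Λ₀`,
the module `Λ` admits a basis `γ₁, …, γ_ν` with
`deg_t(γ_j) ≤ max_{i ≤ j} deg_t(β_i)` for every `j`, where the degree of a
vector is the maximum of the degrees of its entries. -/
theorem lattice_basis_bounded_degree
    (Fq : Type*) [Field Fq] [Fintype Fq]
    (ν : ℕ) (hν : 0 < ν)
    (Λ₀ Λ : Submodule (Polynomial Fq) (Fin ν → Polynomial Fq))
    (hsub : Λ₀ ≤ Λ)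
    (β : Module.Basis (Fin ν) (Polynomial Fq) Λ₀) :
    ∃ γ : Module.Basis (Fin ν) (Polynomial Fq) Λ,
      ∀ j : Fin ν,
        (Finset.univ.sup fun c : Fin ν => (((γ j : Fin ν → Polynomial Fq)) c).natDegree) ≤
          (Finset.Iic j).sup
            (fun i => Finset.univ.sup fun c : Fin ν =>
              (((β i : Fin ν → Polynomial Fq)) c).natDegree) :=
  lattice_basis_bounded_degree_general Fq ν Λ₀ Λ hsub β
end

section
/- Let L be a finite extension of k = 𝔽q(θ) and let φ be the Drinfeld 𝔽q[t]-module of rank r over L determined by κ₁, …, κ_r ∈ L with κ_r ≠ 0. Let P₁, …, P_ℓ ∈ L and a₁, …, a_ℓ ∈ 𝔽q[t], and set F := Σ_{i=1}^ℓ P_i · ā_i ∈ L[t], where ā_i denotes the image of a_i under the coefficientwise inclusion 𝔽q[t] → L[t]. Then Σ_{i=1}^ℓ φ_{a_i}(P_i) = 0 in L if and only if there exists a polynomial g ∈ L[t] such that (t − θ)·g + F = κ_r·g^{(r)} + κ_{r−1}·g^{(r−1)} + ⋯ + κ₁·g^{(1)} in L[t]. -/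
/-- The `j`-th Frobenius twist of a polynomial: raise each coefficient to the
`q^j`-th power. -/
noncomputable def frobTwist {L : Type*} [Semiring L] (q j : ℕ) (g : Polynomial L) :
    Polynomial L :=
  g.sum fun n c => Polynomial.monomial n (c ^ q ^ j)

open Polynomial

section Aux

variable {Fq L : Type*} [Field Fq] [Field L] [Algebra Fq L]
  (φ : Polynomial Fq →ₐ[Fq] Module.End Fq L)

/-- The `𝔽q`-linear "evaluation" map `L[t] → L`, `Σ c_n t^n ↦ Σ φ_{t^n}(c_n)`. -/
noncomputable def drinfeldE : Polynomial L →+ L where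
  toFun h := h.sum fun n c => φ (X ^ n) c
  map_zero' := Polynomial.sum_zero_index _
  map_add' a b := Polynomial.sum_add_index a b _ (fun _ => map_zero _)
    (fun _ x y => map_add _ x y)

lemma drinfeldE_monomial (n : ℕ) (c : L) : drinfeldE φ (monomial n c) = φ (X ^ n) c := by
  simp [drinfeldE, Polynomial.sum_monomial_index]

lemma drinfeldE_C (c : L) : drinfeldE φ (C c) = c := by
  rw [← monomial_zero_left, drinfeldE_monomial]
  simp

variable {q : ℕ}

lemma coeff_frobTwist (hq0 : q ≠ 0) (j : ℕ) (g : Polynomial L) (n : ℕ) :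
    (frobTwist q j g).coeff n = (g.coeff n) ^ q ^ j := by
  have hq0' : q ^ j ≠ 0 := pow_ne_zero _ hq0
  rw [frobTwist, Polynomial.sum_def, Polynomial.finset_sum_coeff]
  by_cases hn : n ∈ g.support
  · rw [Finset.sum_eq_single n (fun b _ hb => by rw [coeff_monomial, if_neg hb])
      (fun h => absurd hn h)]
    rw [coeff_monomial, if_pos rfl]
  · rw [Polynomial.notMem_support_iff.mp hn, zero_pow hq0']
    exact Finset.sum_eq_zero fun b hb => by
      rw [coeff_monomial, if_neg]
      rintro rfl
      exact hn hb

lemma frobTwist_monomial (hq0 : q ≠ 0) (j n : ℕ) (c : L) :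
    frobTwist q j (monomial n c) = monomial n (c ^ q ^ j) := by
  rw [frobTwist, Polynomial.sum_monomial_index]
  rw [zero_pow (pow_ne_zero _ hq0), map_zero]

lemma frobTwist_zero (hq0 : q ≠ 0) (j : ℕ) : frobTwist q j (0 : Polynomial L) = 0 := by
  ext n
  rw [coeff_frobTwist hq0, coeff_zero, zero_pow (pow_ne_zero _ hq0)]

variable {p : ℕ} [Fact p.Prime] [CharP L p] {e : ℕ} (hq : q = p ^ e)

include hq in
lemma frobTwist_add (j : ℕ) (g h : Polynomial L) :
    frobTwist q j (g + h) = frobTwist q j g + frobTwist q j h := by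
  have hq0 : q ≠ 0 := by rw [hq]; exact pow_ne_zero _ (Fact.out : p.Prime).ne_zero
  ext n
  rw [coeff_frobTwist hq0, coeff_add, coeff_add, coeff_frobTwist hq0, coeff_frobTwist hq0]
  subst hq
  rw [← pow_mul]
  exact add_pow_char_pow _ _ _ _

variable (θ : L) (r : ℕ) (κ : ℕ → L)
  (hφ : ∀ x : L, φ Polynomial.X x = θ * x + ∑ j ∈ Finset.Icc 1 r, κ j * x ^ q ^ j)

include hφ hq in
/-- The key identity: `E(t·g) = E(θ·g) + Σ_j E(κ_j · g^{(j)})`. -/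
lemma drinfeldE_X_mul (g : Polynomial L) :
    drinfeldE φ (X * g) =
      drinfeldE φ (C θ * g) +
        ∑ j ∈ Finset.Icc 1 r, drinfeldE φ (C (κ j) * frobTwist q j g) := by
  have hq0 : q ≠ 0 := by rw [hq]; exact pow_ne_zero _ (Fact.out : p.Prime).ne_zero
  induction g using Polynomial.induction_on' with
  | add u v hu hv =>
    simp only [mul_add, frobTwist_add hq, map_add, hu, hv]
    rw [Finset.sum_add_distrib]
    ring
  | monomial n c =>
    rw [X_mul_monomial, C_mul_monomial, drinfeldE_monomial, drinfeldE_monomial,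
      pow_succ, map_mul, Module.End.mul_apply, hφ]
    rw [map_add, map_sum]
    congr 1
    refine Finset.sum_congr rfl fun j _ => ?_
    rw [frobTwist_monomial hq0, C_mul_monomial, drinfeldE_monomial]

include hφ hq in
lemma drinfeldE_T (g : Polynomial L) :
    drinfeldE φ ((X - C θ) * g - ∑ j ∈ Finset.Icc 1 r, C (κ j) * frobTwist q j g) = 0 := by
  rw [sub_mul, map_sub, map_sub, map_sum, drinfeldE_X_mul φ hq θ r κ hφ g]
  ring

include hφ hq in
/-- Construction of the solution `g` by induction on the degree of `h`. -/
lemma drinfeldE_exists_g (h : Polynomial L) (hE : drinfeldE φ h = 0) :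
    ∃ g : Polynomial L, (X - C θ) * g + h =
      ∑ j ∈ Finset.Icc 1 r, C (κ j) * frobTwist q j g := by
  have hq0 : q ≠ 0 := by rw [hq]; exact pow_ne_zero _ (Fact.out : p.Prime).ne_zero
  suffices H : ∀ N : ℕ, ∀ h : Polynomial L, h.natDegree ≤ N → drinfeldE φ h = 0 →
      ∃ g : Polynomial L, (X - C θ) * g + h =
        ∑ j ∈ Finset.Icc 1 r, C (κ j) * frobTwist q j g by
    exact H h.natDegree h le_rfl hE
  intro N
  induction N with
  | zero =>
    intro h hdeg hE0
    have hh : h = C (h.coeff 0) := eq_C_of_natDegree_le_zero hdeg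
    have h0 : h.coeff 0 = 0 := by rw [hh, drinfeldE_C] at hE0; exact hE0
    refine ⟨0, ?_⟩
    rw [hh, h0]
    simp only [map_zero, mul_zero, add_zero]
    refine (Finset.sum_eq_zero fun j _ => ?_).symm
    rw [frobTwist_zero hq0, mul_zero]
  | succ N ih =>
    intro h hdeg hE0
    by_cases hle : h.natDegree ≤ N
    · exact ih h hle hE0
    have hdeg' : h.natDegree = N + 1 := by omega
    set c : L := h.coeff (N + 1) with hc
    set g₁ : Polynomial L := monomial N (-c) with hg₁
    set S : Polynomial L → Polynomial L :=
      fun g => ∑ j ∈ Finset.Icc 1 r, C (κ j) * frobTwist q j g with hS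
    set h' : Polynomial L := h + ((X - C θ) * g₁ - S g₁) with hh'
    have hE' : drinfeldE φ h' = 0 := by
      rw [hh', map_add, hE0, drinfeldE_T φ hq θ r κ hφ g₁, add_zero]
    have hdeg'' : h'.natDegree ≤ N := by
      rw [natDegree_le_iff_coeff_eq_zero]
      intro M hM
      have hSg₁ : (S g₁).coeff M = 0 := by
        rw [hS]
        simp only [Polynomial.finset_sum_coeff, coeff_C_mul, coeff_frobTwist hq0,
          hg₁, coeff_monomial, if_neg (show ¬ N = M by omega),
          zero_pow (pow_ne_zero _ hq0), mul_zero, Finset.sum_const_zero]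
      have hXg₁ : ((X - C θ) * g₁).coeff M = (if N + 1 = M then -c else 0) := by
        simp only [hg₁, sub_mul, coeff_sub, X_mul_monomial, C_mul_monomial, coeff_monomial]
        rw [if_neg (show ¬ N = M by omega), sub_zero]
      rw [hh', coeff_add, coeff_sub, hSg₁, hXg₁, sub_zero]
      rcases eq_or_lt_of_le (Nat.succ_le_of_lt hM) with hM1 | hM1
      · rw [← hM1, if_pos rfl, hc]; ring
      · rw [if_neg (by omega), coeff_eq_zero_of_natDegree_lt (by omega), add_zero]
    obtain ⟨g₂, hg₂⟩ := ih h' hdeg'' hE'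
    refine ⟨g₁ + g₂, ?_⟩
    have hSadd : S (g₁ + g₂) = S g₁ + S g₂ := by
      rw [hS]
      simp only [frobTwist_add hq, mul_add]
      exact Finset.sum_add_distrib
    show (X - C θ) * (g₁ + g₂) + h = S (g₁ + g₂)
    rw [hSadd]
    have hg₂' : (X - C θ) * g₂ + h' = S g₂ := hg₂
    rw [hh'] at hg₂'
    linear_combination hg₂'

end Aux

/-- Lemma 3.1 of the paper. Let `L` be a finite extension of `k = 𝔽q(θ)` and let
`φ` be the Drinfeld `𝔽q[t]`-module of rank `r` over `L` determined by
`κ₁, …, κ_r ∈ L` with `κ_r ≠ 0` (that is, `φ` is the `𝔽q`-algebra homomorphism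
from `𝔽q[t]` to the `𝔽q`-linear endomorphisms of `L` with
`φ_t(x) = θx + κ₁x^q + ⋯ + κ_r x^{q^r}`). For `P₁, …, P_ℓ ∈ L`,
`a₁, …, a_ℓ ∈ 𝔽q[t]` and `F := Σ P_i·ā_i ∈ L[t]`, one has
`Σ φ_{a_i}(P_i) = 0` if and only if there is `g ∈ L[t]` with
`(t − θ)g + F = κ_r g^{(r)} + ⋯ + κ₁ g^{(1)}`. -/
theorem drinfeld_linear_relation_iff_difference_equation
    (p : ℕ) [Fact p.Prime] (e q : ℕ) (he : 0 < e) (hq : q = p ^ e)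
    (Fq : Type*) [Field Fq] [Fintype Fq] (hcard : Fintype.card Fq = q)
    (L : Type*) [Field L] [Algebra Fq L] [Algebra (RatFunc Fq) L]
    [IsScalarTower Fq (RatFunc Fq) L] [FiniteDimensional (RatFunc Fq) L]
    (θ : L) (hθ : θ = algebraMap (RatFunc Fq) L RatFunc.X)
    (r : ℕ) (hr : 1 ≤ r) (κ : ℕ → L) (hκr : κ r ≠ 0)
    (φ : Polynomial Fq →ₐ[Fq] Module.End Fq L)
    (hφ : ∀ x : L, φ Polynomial.X x = θ * x + ∑ j ∈ Finset.Icc 1 r, κ j * x ^ q ^ j)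
    (ℓ : ℕ) (P : Fin ℓ → L) (a : Fin ℓ → Polynomial Fq)
    (F : Polynomial L)
    (hF : F = ∑ i, Polynomial.C (P i) * (a i).map (algebraMap Fq L)) :
    (∑ i, φ (a i) (P i)) = 0 ↔
      ∃ g : Polynomial L,
        (Polynomial.X - Polynomial.C θ) * g + F =
          ∑ j ∈ Finset.Icc 1 r, Polynomial.C (κ j) * frobTwist q j g := by
  -- characteristic of `L` is `p`
  haveI : CharP L p := by
    obtain ⟨p', hp'⟩ := CharP.exists Fq
    obtain ⟨n, hp'prime, hcard'⟩ := FiniteField.card Fq p'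
    have hpp' : p = p' := by
      have h1 : p ∣ p' ^ (n : ℕ) := by
        rw [← hcard', hcard, hq]
        exact dvd_pow_self p he.ne'
      have h2 := (Fact.out : p.Prime).dvd_of_dvd_pow h1
      exact (Nat.prime_dvd_prime_iff_eq Fact.out hp'prime).mp h2
    subst hpp'
    exact charP_of_injective_algebraMap (algebraMap Fq L).injective p
  -- `E F = Σ φ_{a_i}(P_i)`
  have key : ∀ b : Polynomial Fq, ∀ Q : L,
      drinfeldE φ (Polynomial.C Q * b.map (algebraMap Fq L)) = φ b Q := by
    intro b
    induction b using Polynomial.induction_on' with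
    | add u v hu hv =>
      intro Q
      rw [Polynomial.map_add, mul_add, map_add, hu, hv, map_add, LinearMap.add_apply]
    | monomial n d =>
      intro Q
      rw [Polynomial.map_monomial, Polynomial.C_mul_monomial, drinfeldE_monomial,
        ← Polynomial.C_mul_X_pow_eq_monomial]
      have hmul : φ (Polynomial.C d * Polynomial.X ^ n)
          = φ (Polynomial.C d) * φ (Polynomial.X ^ n) := map_mul φ _ _
      have hCd : φ (Polynomial.C d) = d • (1 : Module.End Fq L) := by
        rw [← Polynomial.algebraMap_eq, AlgHom.commutes, Algebra.algebraMap_eq_smul_one]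
      rw [hmul, Module.End.mul_apply, hCd, LinearMap.smul_apply, Module.End.one_apply,
        ← map_smul]
      congr 1
      rw [Algebra.smul_def, mul_comm]
  have hEF : drinfeldE φ F = ∑ i, φ (a i) (P i) := by
    rw [hF, map_sum]
    exact Finset.sum_congr rfl fun i _ => key (a i) (P i)
  constructor
  · intro h0
    exact drinfeldE_exists_g φ hq θ r κ hφ F (by rw [hEF, h0])
  · rintro ⟨g, hg⟩
    rw [← hEF]
    rw [show F = -((Polynomial.X - Polynomial.C θ) * g
        - ∑ j ∈ Finset.Icc 1 r, Polynomial.C (κ j) * frobTwist q j g) by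
      linear_combination hg]
    rw [map_neg, drinfeldE_T φ hq θ r κ hφ g, neg_zero]
end

section
/- Let L be a field of characteristic p containing 𝔽q, and let v be a discrete additive valuation on L, i.e., a map v : L → ℤ ∪ {∞} with v(x) = ∞ iff x = 0, v(xy) = v(x) + v(y), and v(x + y) ≥ min(v(x), v(y)). For h ∈ L[t] set ord_v(h) := min over the coefficients c of h of v(c) (with ord_v(0) = ∞). Let θ, κ₁, …, κ_r ∈ L with κ_r ≠ 0 (r ≥ 1), let P₁, …, P_ℓ ∈ L be nonzero, let a₁, …, a_ℓ ∈ 𝔽q[t], and set F := Σ_{i=1}^ℓ P_i·ā_i ∈ L[t], where ā_i is the coefficientwise image of a_i in L[t]. Define C_v := min of the following integers: min_{1 ≤ i ≤ ℓ} v(P_i); ⌊(v(κ_j) − v(κ_r))/(q^r − q^j)⌋ for each 1 ≤ j ≤ r − 1 with κ_j ≠ 0; and ⌊(min(0, v(θ)) − v(κ_r))/(q^r − 1)⌋. If g ∈ L[t] satisfies (t − θ)·g + F = κ_r·g^{(r)} + ⋯ + κ₁·g^{(1)} in L[t], then ord_v(F) ≥ C_v and ord_v(g) ≥ C_v. -/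
/-- `ord_v` of a polynomial: the minimum of `v` over its coefficients (with
`ord_v(0) = ∞`). -/
noncomputable def ordPoly {L : Type*} [Semiring L] (v : L → WithTop ℤ)
    (h : Polynomial L) : WithTop ℤ :=
  h.support.inf fun n => v (h.coeff n)

/-!
Nonzero elements of `𝔽q` are roots of unity, hence of valuation `0`, so `ord_v F ≥ min_i v(P_i)`.
Suppose `m := ord_v g < C_v` and let `c`, the coefficient of `t^n` in `g`, have `v c = m`. The
floor bounds defining `C_v` say exactly that `v(κ_r) + q^r m` is strictly smaller than
`v(κ_j) + q^j m` for `j < r`, than `min(0, v θ) + m`, and than `ord_v F`. In the coefficient of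
`t^n` of the equation the right side is then dominated by its single term `κ_r c^{q^r}`, of
valuation `v(κ_r) + q^r m`, while the left side has valuation at least
`min(ord_v (t - θ) + m, ord_v F)`, which is larger: a contradiction.
-/

open Polynomial Finset

theorem coe_add_nsmul_lt_of_lt_fdiv {a b m : ℤ} {Q Q' : ℕ} (hQ : Q' < Q)
    (h : m < (a - b).fdiv (Q - Q')) :
    (b : WithTop ℤ) + Q • (m : WithTop ℤ) < a + Q' • (m : WithTop ℤ) := by
  rw [Int.fdiv_eq_ediv_of_nonneg _ (by omega), ← Int.add_one_le_iff,
    Int.le_ediv_iff_mul_le (by omega)] at h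
  simp only [← WithTop.coe_nsmul, ← WithTop.coe_add, WithTop.coe_lt_coe, nsmul_eq_mul]
  nlinarith

theorem FiniteField.addValuation_ringHom_eq_zero {Fq L Γ₀ : Type*} [Field Fq] [Finite Fq]
    [CommRing L] [LinearOrderedAddCommMonoidWithTop Γ₀] (V : AddValuation L Γ₀) (ι : Fq →+* L)
    {c : Fq} (hc : c ≠ 0) : V (ι c) = 0 := by
  let _ : Algebra Fq L := ι.toAlgebra
  exact FiniteField.valuation_algebraMap_eq_one (AddValuation.toValuation V) c hc

theorem frobTwist_coeff {L : Type*} [Semiring L] {q : ℕ} (hq : q ≠ 0) (j : ℕ) (g : L[X])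
    (n : ℕ) : (frobTwist q j g).coeff n = g.coeff n ^ q ^ j := by
  classical
  simp only [frobTwist, Polynomial.sum_def, finsetSum_coeff, coeff_monomial, sum_ite_eq',
    mem_support_iff, ite_not]
  split_ifs with h
  · rw [h, zero_pow (pow_ne_zero j hq)]
  · rfl

section ordPoly

variable {L : Type*} [Field L] (V : AddValuation L (WithTop ℤ))

theorem le_ordPoly_iff {B : WithTop ℤ} {h : L[X]} :
    B ≤ ordPoly V h ↔ ∀ n, B ≤ V (h.coeff n) := by
  refine ⟨fun hB n => ?_, fun hB => Finset.le_inf fun n _ => hB n⟩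
  by_cases hn : n ∈ h.support
  · exact hB.trans (Finset.inf_le hn)
  · rw [notMem_support_iff.1 hn, AddValuation.map_zero]
    exact le_top

theorem exists_coeff_eq_ordPoly {h : L[X]} (hh : h ≠ 0) :
    ∃ n, V (h.coeff n) = ordPoly V h := by
  obtain ⟨n, -, hn⟩ :=
    h.support.exists_mem_eq_inf (nonempty_support_iff.2 hh) fun n => V (h.coeff n)
  exact ⟨n, hn.symm⟩

theorem ordPoly_add_le_coeff_mul (h₁ h₂ : L[X]) (n : ℕ) :
    ordPoly V h₁ + ordPoly V h₂ ≤ V ((h₁ * h₂).coeff n) := by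
  rw [coeff_mul]
  refine V.map_le_sum fun k _ => ?_
  rw [V.map_mul]
  exact add_le_add ((le_ordPoly_iff V).1 le_rfl _) ((le_ordPoly_iff V).1 le_rfl _)

theorem min_le_ordPoly_X_sub_C (θ : L) : min 0 (V θ) ≤ ordPoly V (X - C θ) := by
  refine (le_ordPoly_iff V).2 fun n => ?_
  rcases n with _ | _ | n
  · simp
  · simp
  · simp [coeff_X]

theorem inf_le_ordPoly_sum_C_mul_map {Fq ι : Type*} [Field Fq] [Finite Fq] (φ : Fq →+* L)
    (s : Finset ι) (P : ι → L) (a : ι → Fq[X]) :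
    s.inf (fun i => V (P i)) ≤ ordPoly V (∑ i ∈ s, C (P i) * (a i).map φ) := by
  refine (le_ordPoly_iff V).2 fun n => ?_
  simp only [finsetSum_coeff, coeff_C_mul, coeff_map]
  refine V.map_le_sum fun i hi => ?_
  by_cases hc : (a i).coeff n = 0
  · simp [hc]
  · rw [V.map_mul, FiniteField.addValuation_ringHom_eq_zero V φ hc, add_zero]
    exact Finset.inf_le hi

end ordPoly

section DifferenceEquation

variable {L : Type*} [Field L] (V : AddValuation L (WithTop ℤ)) {q r : ℕ} {κ : ℕ → L}
  {θ : L} {F g : L[X]}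

theorem false_of_frobenius_difference_eq_of_lt (hq : q ≠ 0) (hr : 1 ≤ r)
    (hg : (X - C θ) * g + F = ∑ j ∈ Icc 1 r, C (κ j) * frobTwist q j g)
    {n : ℕ} (hn : V (g.coeff n) = ordPoly V g)
    (hθ : V (κ r) + q ^ r • V (g.coeff n) < min 0 (V θ) + V (g.coeff n))
    (hF : V (κ r) + q ^ r • V (g.coeff n) < ordPoly V F)
    (hκ : ∀ j ∈ Ico 1 r,
      V (κ r) + q ^ r • V (g.coeff n) < V (κ j) + q ^ j • V (g.coeff n)) :
    False := by
  have hrhs : V ((∑ j ∈ Icc 1 r, C (κ j) * frobTwist q j g).coeff n) =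
      V (κ r) + q ^ r • V (g.coeff n) := by
    simp only [finsetSum_coeff, coeff_C_mul, frobTwist_coeff hq]
    rw [← add_sum_erase _ _ (mem_Icc.2 ⟨hr, le_rfl⟩), V.map_add_eq_of_lt_left, V.map_mul,
      V.map_pow]
    refine V.map_lt_sum (by simpa [V.map_mul, V.map_pow] using ne_top_of_lt hθ) fun j hj => ?_
    rw [V.map_mul, V.map_pow, V.map_mul, V.map_pow]
    exact hκ j (by simp only [mem_erase, mem_Icc, mem_Ico] at hj ⊢; omega)
  have hlhs : V (κ r) + q ^ r • V (g.coeff n) < V (((X - C θ) * g + F).coeff n) := by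
    rw [coeff_add]
    refine V.map_lt_add (hθ.trans_le ?_) (hF.trans_le ((le_ordPoly_iff V).1 le_rfl n))
    rw [hn]
    exact (add_le_add (min_le_ordPoly_X_sub_C V θ) le_rfl).trans
      (ordPoly_add_le_coeff_mul V _ _ n)
  rw [hg, hrhs] at hlhs
  exact lt_irrefl _ hlhs

theorem le_ordPoly_of_frobenius_difference_eq {w : L → ℤ} (hvw : ∀ x, x ≠ 0 → V x = w x)
    (hq : 1 < q) (hr : 1 ≤ r) (hκr : κ r ≠ 0)
    (hg : (X - C θ) * g + F = ∑ j ∈ Icc 1 r, C (κ j) * frobTwist q j g)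
    {B : WithTop ℤ} (hBF : B ≤ ordPoly V F)
    (hBκ : ∀ j ∈ Ico 1 r, κ j ≠ 0 → B ≤ ((w (κ j) - w (κ r)).fdiv ((q : ℤ) ^ r - q ^ j) : ℤ))
    {t : ℤ} (hBθ : B ≤ ((t - w (κ r)).fdiv ((q : ℤ) ^ r - 1) : ℤ))
    (ht : (t : WithTop ℤ) ≤ min 0 (V θ)) :
    B ≤ ordPoly V g := by
  by_contra! hgB
  have hg0 : g ≠ 0 := by
    rintro rfl
    simp [ordPoly] at hgB
  obtain ⟨n, hn⟩ := exists_coeff_eq_ordPoly V hg0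
  have hcn : g.coeff n ≠ 0 := by
    rw [← V.ne_top_iff, hn]
    exact ne_top_of_lt hgB
  obtain ⟨m, hm⟩ : ∃ m : ℤ, V (g.coeff n) = m := ⟨_, hvw _ hcn⟩
  have hmB : (m : WithTop ℤ) < B := hm ▸ hn ▸ hgB
  have hqpow : ∀ j < r, q ^ j < q ^ r := fun j hj => Nat.pow_lt_pow_right hq hj
  have hθ : V (κ r) + q ^ r • V (g.coeff n) < t + V (g.coeff n) := by
    simpa [hm, hvw _ hκr] using coe_add_nsmul_lt_of_lt_fdiv (hqpow 0 hr)
      (by exact_mod_cast hmB.trans_le hBθ)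
  refine false_of_frobenius_difference_eq_of_lt V (by omega) hr hg hn
    (hθ.trans_le (add_le_add ht le_rfl)) ?_ fun j hj => ?_
  · calc V (κ r) + q ^ r • V (g.coeff n) < t + V (g.coeff n) := hθ
      _ ≤ 0 + V (g.coeff n) := add_le_add (ht.trans (min_le_left _ _)) le_rfl
      _ < B := by rwa [zero_add, hm]
      _ ≤ ordPoly V F := hBF
  · by_cases hκj : κ j = 0
    · rw [hκj, V.map_zero, top_add]
      exact hθ.trans_le le_top
    simpa [hm, hvw _ hκr, hvw _ hκj] using
      coe_add_nsmul_lt_of_lt_fdiv (hqpow j (mem_Ico.1 hj).2)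
        (by exact_mod_cast hmB.trans_le (hBκ j hj hκj))

end DifferenceEquation

theorem difference_equation_valuation_bound_general
    (q : ℕ)
    (Fq : Type*) [Field Fq] [Fintype Fq] (hcard : Fintype.card Fq = q)
    (L : Type*) [Field L] [DecidableEq L] (ι : Fq →+* L)
    (v : L → WithTop ℤ) (w : L → ℤ)
    (hv0 : ∀ x : L, v x = ⊤ ↔ x = 0)
    (hvw : ∀ x : L, x ≠ 0 → v x = (w x : WithTop ℤ))
    (hvmul : ∀ x y : L, v (x * y) = v x + v y)
    (hvadd : ∀ x y : L, min (v x) (v y) ≤ v (x + y))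
    (θ : L) (r : ℕ) (hr : 1 ≤ r) (κ : ℕ → L) (hκr : κ r ≠ 0)
    (ℓ : ℕ) (P : Fin ℓ → L) (hP : ∀ i, P i ≠ 0)
    (a : Fin ℓ → Polynomial Fq)
    (F : Polynomial L)
    (hF : F = ∑ i, Polynomial.C (P i) * (a i).map ι)
    (g : Polynomial L)
    (hg : (Polynomial.X - Polynomial.C θ) * g + F =
      ∑ j ∈ Finset.Icc 1 r, Polynomial.C (κ j) * frobTwist q j g) :
    min (Finset.univ.inf fun i : Fin ℓ => ((w (P i) : ℤ) : WithTop ℤ))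
        (min
          (((Finset.Icc 1 (r - 1)).filter fun j => κ j ≠ 0).inf fun j =>
            ((Int.fdiv (w (κ j) - w (κ r)) ((q : ℤ) ^ r - (q : ℤ) ^ j) : ℤ) : WithTop ℤ))
          ((Int.fdiv ((if θ = 0 then 0 else min 0 (w θ)) - w (κ r))
              ((q : ℤ) ^ r - 1) : ℤ) : WithTop ℤ))
      ≤ ordPoly v F ∧
    min (Finset.univ.inf fun i : Fin ℓ => ((w (P i) : ℤ) : WithTop ℤ))
        (min
          (((Finset.Icc 1 (r - 1)).filter fun j => κ j ≠ 0).inf fun j =>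
            ((Int.fdiv (w (κ j) - w (κ r)) ((q : ℤ) ^ r - (q : ℤ) ^ j) : ℤ) : WithTop ℤ))
          ((Int.fdiv ((if θ = 0 then 0 else min 0 (w θ)) - w (κ r))
              ((q : ℤ) ^ r - 1) : ℤ) : WithTop ℤ))
      ≤ ordPoly v g := by
  have hv1 : v 1 = 0 := by
    have h := hvmul 1 1
    rw [one_mul] at h
    lift v 1 to ℤ using (hv0 1).not.2 one_ne_zero with k
    norm_cast at h ⊢
    omega
  let V := AddValuation.of v ((hv0 0).2 rfl) hv1 hvadd hvmul
  have hPw : (univ.inf fun i => V (P i)) = univ.inf fun i => (w (P i) : WithTop ℤ) :=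
    inf_congr rfl fun i _ => hvw _ (hP i)
  -- `C_v ≤ ord_v F` is both the first claim and an input to the second.
  refine (fun hCF => ⟨hCF, le_ordPoly_of_frobenius_difference_eq V hvw
    (hcard ▸ Fintype.one_lt_card) hr hκr hg hCF (fun j hj hκj => ?bound_κ)
    ((min_le_right _ _).trans (min_le_right _ _)) ?bound_θ⟩) ?bound_F
  case bound_F =>
    exact (min_le_left _ _).trans (hPw ▸ hF ▸ inf_le_ordPoly_sum_C_mul_map V ι univ P a)
  case bound_κ =>
    exact (min_le_right _ _).trans ((min_le_left _ _).trans
      (inf_le (mem_filter.2 ⟨by simp only [mem_Ico, mem_Icc] at hj ⊢; omega, hκj⟩)))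
  case bound_θ =>
    split_ifs with hθ
    · simp [V, hθ]
    · simp [V, hvw _ hθ]

/-- Local valuation bound from the proof of Theorem 3.2 of the paper. Let `v` be
a discrete additive valuation on a field `L ⊇ 𝔽q` of characteristic `p` (with
integer value `w x` on every nonzero `x`). With
`C_v := min { min_i v(P_i), ⌊(v(κ_j) − v(κ_r))/(q^r − q^j)⌋ (1 ≤ j ≤ r−1, κ_j ≠ 0),
⌊(min(0, v(θ)) − v(κ_r))/(q^r − 1)⌋ }`, any solution `g ∈ L[t]` of
`(t − θ)g + F = κ_r g^{(r)} + ⋯ + κ₁ g^{(1)}` with `F = Σ P_i·ā_i` satisfies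
`ord_v(F) ≥ C_v` and `ord_v(g) ≥ C_v`. -/
theorem difference_equation_valuation_bound
    (p : ℕ) [Fact p.Prime] (e q : ℕ) (he : 0 < e) (hq : q = p ^ e)
    (Fq : Type*) [Field Fq] [Fintype Fq] (hcard : Fintype.card Fq = q)
    (L : Type*) [Field L] [DecidableEq L] (ι : Fq →+* L)
    (v : L → WithTop ℤ) (w : L → ℤ)
    (hv0 : ∀ x : L, v x = ⊤ ↔ x = 0)
    (hvw : ∀ x : L, x ≠ 0 → v x = (w x : WithTop ℤ))
    (hvmul : ∀ x y : L, v (x * y) = v x + v y)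
    (hvadd : ∀ x y : L, min (v x) (v y) ≤ v (x + y))
    (θ : L) (r : ℕ) (hr : 1 ≤ r) (κ : ℕ → L) (hκr : κ r ≠ 0)
    (ℓ : ℕ) (P : Fin ℓ → L) (hP : ∀ i, P i ≠ 0)
    (a : Fin ℓ → Polynomial Fq)
    (F : Polynomial L)
    (hF : F = ∑ i, Polynomial.C (P i) * (a i).map ι)
    (g : Polynomial L)
    (hg : (Polynomial.X - Polynomial.C θ) * g + F =
      ∑ j ∈ Finset.Icc 1 r, Polynomial.C (κ j) * frobTwist q j g) :
    min (Finset.univ.inf fun i : Fin ℓ => ((w (P i) : ℤ) : WithTop ℤ))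
        (min
          (((Finset.Icc 1 (r - 1)).filter fun j => κ j ≠ 0).inf fun j =>
            ((Int.fdiv (w (κ j) - w (κ r)) ((q : ℤ) ^ r - (q : ℤ) ^ j) : ℤ) : WithTop ℤ))
          ((Int.fdiv ((if θ = 0 then 0 else min 0 (w θ)) - w (κ r))
              ((q : ℤ) ^ r - 1) : ℤ) : WithTop ℤ))
      ≤ ordPoly v F ∧
    min (Finset.univ.inf fun i : Fin ℓ => ((w (P i) : ℤ) : WithTop ℤ))
        (min
          (((Finset.Icc 1 (r - 1)).filter fun j => κ j ≠ 0).inf fun j =>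
            ((Int.fdiv (w (κ j) - w (κ r)) ((q : ℤ) ^ r - (q : ℤ) ^ j) : ℤ) : WithTop ℤ))
          ((Int.fdiv ((if θ = 0 then 0 else min 0 (w θ)) - w (κ r))
              ((q : ℤ) ^ r - 1) : ℤ) : WithTop ℤ))
      ≤ ordPoly v g :=
  difference_equation_valuation_bound_general q Fq hcard L ι v w hv0 hvw hvmul hvadd θ r hr κ hκr ℓ
    P hP a F hF g hg
end

section
/- Let ℓ ≥ 1, let G ⊆ (𝔽q[t])^ℓ be an 𝔽q[t]-submodule, and let N ≥ 0. Suppose x₁, …, x_s ∈ G satisfy deg_t(x_i) ≤ N for all i and the 𝔽q[t]-span of x₁, …, x_s has the same rank as G (equivalently, the quotient of G by this span is a torsion 𝔽q[t]-module). Then G admits an 𝔽q[t]-basis m₁, …, m_ν with deg_t(m_j) ≤ N for every j. -/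
/-!
Among the linearly independent families in `G` of vectors of degree `≤ N`, take one of maximal
size, and among those one, `b`, of minimal total degree. Its span is saturated in `G`: if
`v ∉ span b` but `c • v ∈ span b` with `c` monic of positive degree, dividing the coefficients of
`c • v` by `c` replaces `v`, modulo `span b`, by some `w` with `c • w = ∑ rⱼ • bⱼ` and
`deg rⱼ < deg c`. Comparing degrees gives `deg w < max {deg bⱼ | rⱼ ≠ 0}`, and exchanging `w` for
a `bⱼ` of maximal degree with `rⱼ ≠ 0` keeps the family independent while lowering its total
degree. By maximality every `xᵢ` has a nonzero multiple in `span b`, so `span b` contains the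
`xᵢ` and then, as `G / span x` is torsion, all of `G`.
-/

open Polynomial Submodule

section Degree

variable {R ι : Type*} [Semiring R] [Fintype ι]

def vecNatDegree (v : ι → R[X]) : ℕ := Finset.univ.sup fun k => (v k).natDegree

theorem vecNatDegree_le_iff {v : ι → R[X]} {N : ℕ} :
    vecNatDegree v ≤ N ↔ ∀ k, (v k).natDegree ≤ N := by
  simp [vecNatDegree]

theorem vecNatDegree_lt_of_smul_eq_sum [NoZeroDivisors R] {κ : Type*} [Fintype κ]
    {c : R[X]} (hc : 0 < c.natDegree) {w : ι → R[X]} (hw : w ≠ 0)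
    {r : κ → R[X]} {b : κ → ι → R[X]} (hcw : c • w = ∑ j, r j • b j)
    (hr : ∀ j, (r j).degree < c.degree) {D : ℕ} (hD : ∀ j, r j ≠ 0 → vecNatDegree (b j) ≤ D) :
    vecNatDegree w < D := by
  have hcoord : ∀ k, w k ≠ 0 → (w k).natDegree < D := by
    intro k hk
    have hsum : (c * w k).natDegree ≤ c.natDegree - 1 + D := by
      have hk' : c * w k = ∑ j, r j * b j k := by simpa using congrFun hcw k
      rw [hk']
      refine natDegree_sum_le_of_forall_le _ _ fun j _ => ?_
      rcases eq_or_ne (r j) 0 with hj | hj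
      · simp [hj]
      have hrj : (r j).natDegree < c.natDegree := natDegree_lt_natDegree hj (hr j)
      have hbj : (b j k).natDegree ≤ D := vecNatDegree_le_iff.mp (hD j hj) k
      have := natDegree_mul_le (p := r j) (q := b j k)
      omega
    rw [natDegree_mul (ne_zero_of_natDegree_gt hc) hk] at hsum
    omega
  obtain ⟨k₁, hk₁⟩ := Function.ne_iff.mp hw
  have hD : 0 < D := (Nat.zero_le _).trans_lt (hcoord k₁ hk₁)
  refine (Finset.sup_lt_iff hD).mpr fun k _ => ?_
  rcases eq_or_ne (w k) 0 with hk | hk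
  · simpa [hk] using hD
  · exact hcoord k hk

end Degree

theorem exists_sub_mem_span_smul_eq_sum_modByMonic {R M κ : Type*} [CommRing R] [Nontrivial R]
    [AddCommGroup M] [Module R[X] M] [Fintype κ] {b : κ → M} {c : R[X]} (hc : c.Monic) {v : M}
    (hcv : c • v ∈ span R[X] (Set.range b)) :
    ∃ (w : M) (r : κ → R[X]), v - w ∈ span R[X] (Set.range b) ∧
      c • w = ∑ j, r j • b j ∧ ∀ j, (r j).degree < c.degree := by
  obtain ⟨a, ha⟩ := (mem_span_range_iff_exists_fun R[X]).mp hcv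
  refine ⟨v - ∑ j, (a j /ₘ c) • b j, fun j => a j %ₘ c, ?_, ?_,
    fun j => degree_modByMonic_lt _ hc⟩
  · rw [sub_sub_cancel]
    exact sum_mem fun j _ => smul_mem _ _ (subset_span ⟨j, rfl⟩)
  · rw [smul_sub, ← ha, Finset.smul_sum, ← Finset.sum_sub_distrib]
    refine Finset.sum_congr rfl fun j _ => ?_
    rw [smul_smul, ← sub_smul, ← eq_sub_of_add_eq (modByMonic_add_div (a j) c)]

theorem exists_update_vecNatDegree_lt {K ι κ : Type*} [Field K] [Fintype ι] [Fintype κ]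
    [DecidableEq κ] {b : κ → ι → K[X]} (hb : LinearIndependent K[X] b) {v : ι → K[X]}
    (hv : v ∉ span K[X] (Set.range b)) {c : K[X]} (hc : c ≠ 0)
    (hcv : c • v ∈ span K[X] (Set.range b)) :
    ∃ j₀ w, v - w ∈ span K[X] (Set.range b) ∧ vecNatDegree w < vecNatDegree (b j₀) ∧
      LinearIndependent K[X] (Function.update b j₀ w) := by
  classical
  obtain ⟨c, hmon, hcv⟩ : ∃ c' : K[X], c'.Monic ∧ c' • v ∈ span K[X] (Set.range b) :=
    ⟨c * C c.leadingCoeff⁻¹, monic_mul_leadingCoeff_inv hc, by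
      rw [mul_comm, ← smul_smul]; exact smul_mem _ _ hcv⟩
  have hcdeg : 0 < c.natDegree :=
    Nat.pos_of_ne_zero fun h => hv (by simpa [hmon.natDegree_eq_zero.mp h] using hcv)
  obtain ⟨w, r, hvw, hcw, hr⟩ := exists_sub_mem_span_smul_eq_sum_modByMonic hmon hcv
  have hw : w ∉ span K[X] (Set.range b) := fun h => hv (by simpa using add_mem hvw h)
  obtain ⟨j, hj⟩ : ∃ j, r j ≠ 0 := by
    by_contra! h
    have : c • w = 0 := by simp [hcw, h]
    exact hw (by simp [(smul_eq_zero.mp this).resolve_left hmon.ne_zero])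
  obtain ⟨j₀, hj₀, hmax⟩ := Finset.exists_max_image {j | r j ≠ 0}
    (fun j => vecNatDegree (b j)) ⟨j, by simpa using hj⟩
  refine ⟨j₀, w, hvw,
    vecNatDegree_lt_of_smul_eq_sum hcdeg (fun h => hw (by rw [h]; exact zero_mem _)) hcw hr
      fun j hj => hmax j (by simpa using hj),
    hb.update j₀ w ⟨c, mem_nonZeroDivisors_of_ne_zero hmon.ne_zero,
      (Finsupp.linearEquivFunOnFinite K[X] K[X] κ).symm r,
      mem_nonZeroDivisors_of_ne_zero (by simpa using hj₀), ?_⟩⟩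
  rw [hcw, Finsupp.linearCombination_eq_fintype_linearCombination_apply,
    Fintype.linearCombination_apply]

section BoundedFamilies

variable {K ι : Type*} [Field K] [Fintype ι] (G : Submodule K[X] (ι → K[X])) (N : ℕ)

def boundedIndepFamilies (κ : Type*) : Set (κ → ι → K[X]) :=
  {b | (∀ j, b j ∈ G) ∧ (∀ j, vecNatDegree (b j) ≤ N) ∧ LinearIndependent K[X] b}

variable {G N}

theorem card_le_of_mem_boundedIndepFamilies {n : ℕ} {b : Fin n → ι → K[X]}
    (hb : b ∈ boundedIndepFamilies G N (Fin n)) : n ≤ Fintype.card ι := by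
  simpa [Module.finrank_fintype_fun_eq_card] using hb.2.2.fintype_card_le_finrank

theorem exists_maximal_boundedIndepFamilies :
    ∃ n, (boundedIndepFamilies G N (Fin n)).Nonempty ∧
      ¬ (boundedIndepFamilies G N (Fin (n + 1))).Nonempty := by
  by_contra! h
  have hall : ∀ n, (boundedIndepFamilies G N (Fin n)).Nonempty := fun n =>
    n.rec ⟨Fin.elim0, fun j => j.elim0, fun j => j.elim0, linearIndependent_empty_type⟩ h
  obtain ⟨b, hb⟩ := hall (Fintype.card ι + 1)
  exact absurd (card_le_of_mem_boundedIndepFamilies hb) (by omega)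

theorem mem_span_of_smul_mem_span_of_isMinOn {κ : Type*} [Fintype κ]
    {b : κ → ι → K[X]} (hb : b ∈ boundedIndepFamilies G N κ)
    (hmin : IsMinOn (fun b => ∑ j, vecNatDegree (b j)) (boundedIndepFamilies G N κ) b)
    {v : ι → K[X]} (hvG : v ∈ G) {c : K[X]} (hc : c ≠ 0)
    (hcv : c • v ∈ span K[X] (Set.range b)) : v ∈ span K[X] (Set.range b) := by
  classical
  by_contra hv
  obtain ⟨j₀, w, hvw, hw, hli⟩ := exists_update_vecNatDegree_lt hb.2.2 hv hc hcv
  have hwG : w ∈ G := by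
    simpa using sub_mem hvG (span_le.mpr (Set.range_subset_iff.mpr hb.1) hvw)
  have hb' : Function.update b j₀ w ∈ boundedIndepFamilies G N κ := by
    refine ⟨(Function.forall_update_iff b fun _ u => u ∈ G).mpr ⟨hwG, fun j _ => hb.1 j⟩,
      (Function.forall_update_iff b fun _ u => vecNatDegree u ≤ N).mpr
        ⟨(hw.trans_le (hb.2.1 j₀)).le, fun j _ => hb.2.1 j⟩, hli⟩
  refine not_le_of_gt (Finset.sum_lt_sum (fun j _ => ?_) ⟨j₀, by simpa⟩)
    (isMinOn_iff.mp hmin _ hb')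
  rcases eq_or_ne j j₀ with rfl | h
  · simpa using hw.le
  · simp [h]

theorem exists_smul_mem_span_of_not_nonempty_succ {n : ℕ} {b : Fin n → ι → K[X]}
    (hb : b ∈ boundedIndepFamilies G N (Fin n))
    (hmax : ¬ (boundedIndepFamilies G N (Fin (n + 1))).Nonempty)
    {x : ι → K[X]} (hxG : x ∈ G) (hx : vecNatDegree x ≤ N) :
    ∃ c : K[X], c ≠ 0 ∧ c • x ∈ span K[X] (Set.range b) := by
  by_contra! h
  have hli : LinearIndependent K[X] (Fin.cons x b : Fin (n + 1) → ι → K[X]) :=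
    .finCons' x b hb.2.2 fun c y hy hcxy => by
      by_contra hc
      exact h c hc (by rw [eq_neg_of_add_eq_zero_left hcxy]; exact neg_mem hy)
  exact hmax ⟨Fin.cons x b, Fin.forall_fin_succ.mpr ⟨hxG, hb.1⟩,
    Fin.forall_fin_succ.mpr ⟨hx, hb.2.1⟩, hli⟩

end BoundedFamilies

theorem bounded_degree_basis_of_full_rank_family_general
    (Fq : Type*) [Field Fq]
    (ℓ : ℕ)
    (G : Submodule (Polynomial Fq) (Fin ℓ → Polynomial Fq))
    (N : ℕ)
    (s : ℕ) (x : Fin s → (Fin ℓ → Polynomial Fq))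
    (hxG : ∀ i, x i ∈ G)
    (hdeg : ∀ i c, (x i c).natDegree ≤ N)
    (htor : ∀ y ∈ G, ∃ c : Polynomial Fq, c ≠ 0 ∧
      c • y ∈ Submodule.span (Polynomial Fq) (Set.range x)) :
    ∃ (ν : ℕ) (mb : Module.Basis (Fin ν) (Polynomial Fq) G),
      ∀ j c, (((mb j : Fin ℓ → Polynomial Fq)) c).natDegree ≤ N := by
  obtain ⟨ν, hne, hmax⟩ := exists_maximal_boundedIndepFamilies (G := G) (N := N)
  set f := fun b : Fin ν → Fin ℓ → Fq[X] => ∑ j, vecNatDegree (b j)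
  set b := Function.argminOn f _ hne
  have hb : b ∈ boundedIndepFamilies G N (Fin ν) := Function.argminOn_mem f _ hne
  have hsat : ∀ v ∈ G, ∀ c : Fq[X], c ≠ 0 → c • v ∈ span Fq[X] (Set.range b) →
      v ∈ span Fq[X] (Set.range b) := fun v hv c hc =>
    mem_span_of_smul_mem_span_of_isMinOn hb (fun b' hb' => Function.argminOn_le f _ hb') hv hc
  have hx : ∀ i, x i ∈ span Fq[X] (Set.range b) := fun i =>
    let ⟨c, hc, hcx⟩ := exists_smul_mem_span_of_not_nonempty_succ hb hmax (hxG i)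
      (vecNatDegree_le_iff.mpr (hdeg i))
    hsat _ (hxG i) c hc hcx
  have hspan : span Fq[X] (Set.range b) = G := by
    refine le_antisymm (span_le.mpr (Set.range_subset_iff.mpr hb.1)) fun y hy => ?_
    obtain ⟨c, hc, hcy⟩ := htor y hy
    exact hsat y hy c hc (span_le.mpr (Set.range_subset_iff.mpr hx) hcy)
  refine ⟨ν, (Module.Basis.span hb.2.2).map (LinearEquiv.ofEq _ _ hspan), fun j => ?_⟩
  simpa [Module.Basis.span_apply] using vecNatDegree_le_iff.mp (hb.2.1 j)

/-- The lattice-theoretic step of Section 3.3 of the paper. Let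
`G ⊆ (𝔽q[t])^ℓ` be an `𝔽q[t]`-submodule and suppose `x₁, …, x_s ∈ G` have
degree at most `N` and span a submodule of full rank in `G` (i.e. the quotient
of `G` by their span is a torsion `𝔽q[t]`-module). Then `G` admits an
`𝔽q[t]`-basis all of whose elements have degree at most `N`. -/
theorem bounded_degree_basis_of_full_rank_family
    (Fq : Type*) [Field Fq] [Fintype Fq]
    (ℓ : ℕ) (hℓ : 1 ≤ ℓ)
    (G : Submodule (Polynomial Fq) (Fin ℓ → Polynomial Fq))
    (N : ℕ)
    (s : ℕ) (x : Fin s → (Fin ℓ → Polynomial Fq))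
    (hxG : ∀ i, x i ∈ G)
    (hdeg : ∀ i c, (x i c).natDegree ≤ N)
    (htor : ∀ y ∈ G, ∃ c : Polynomial Fq, c ≠ 0 ∧
      c • y ∈ Submodule.span (Polynomial Fq) (Set.range x)) :
    ∃ (ν : ℕ) (mb : Module.Basis (Fin ν) (Polynomial Fq) G),
      ∀ j c, (((mb j : Fin ℓ → Polynomial Fq)) c).natDegree ≤ N :=
  bounded_degree_basis_of_full_rank_family_general Fq ℓ G N s x hxG hdeg htor
end

section
/- Let m ≤ n be positive integers and let B be an m × n matrix with entries in 𝔽q[t], each entry of degree at most 1, whose rank over the fraction field 𝔽q(t) equals m. Let ℓ ≤ n, let π : (𝔽q[t])ⁿ → (𝔽q[t])^ℓ be the projection onto the last ℓ coordinates, and let G := π({x ∈ (𝔽q[t])ⁿ : B·xᵀ = 0}). Then G admits an 𝔽q[t]-basis m₁, …, m_ν with deg_t(m_j) ≤ n for every j. -/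
/-!
Write `B = B₀ + X • B₁` with constant matrices `B₀, B₁`. A vector `z` of polynomials lies in the
kernel of `B` iff its coefficient vectors satisfy `B₀ z₀ = 0` and `B₀ z₍ₖ₊₁₎ + B₁ zₖ = 0`. Hence the
top coefficient `z_d` of a kernel vector of degree `d` lies in the `(d+1)`-st term of the Wong
sequence `W₀ = 0`, `Wₖ₊₁ = B₀⁻¹(B₁ Wₖ)`, an increasing chain in `𝔽qⁿ` which is constant from step
`n` on. So `z_d` is also the top coefficient of a kernel vector of degree `≤ n`, and subtracting
`X ^ (d - n)` times that vector lowers the degree: the kernel, and with it `G`, is spanned by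
vectors of degree `≤ n`.

A finite spanning family of such vectors is then made linearly independent by cancelling leading
terms: in a linear dependency, the leading coefficient vectors of the terms of maximal degree are
dependent over `𝔽q`, and shifting them to a common degree produces a combination of strictly
smaller degree that can replace one of the vectors without changing the span.
-/

open Polynomial Finset Submodule Matrix

theorem Submodule.span_erase_zero {R M : Type*} [Semiring R] [AddCommMonoid M] [Module R M]
    [DecidableEq M] (T : Finset M) : span R ↑(T.erase 0) = span R (T : Set M) := by
  rw [coe_erase, ← span_insert_zero, Set.insert_sdiff_singleton, span_insert_zero]

theorem Submodule.exists_finBasis_of_linearIndepOn {R M : Type*} [Ring R] [AddCommGroup M]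
    [Module R M] {T : Finset M} (hli : LinearIndepOn R id (T : Set M)) {G : Submodule R M}
    (hT : span R T = G) : ∃ (ν : ℕ) (b : Module.Basis (Fin ν) R G), ∀ j, (b j : M) ∈ T := by
  have hli' : LinearIndependent R (Subtype.val : ↥(T : Set M) → M) := hli
  have hrange : span R (Set.range (Subtype.val : ↥(T : Set M) → M)) = G := by
    rw [Subtype.range_coe, hT]
  exact ⟨_, ((Module.Basis.span hli').map (LinearEquiv.ofEq _ _ hrange)).reindex
    (Fintype.equivFin _), fun j => by simp⟩

theorem Submodule.span_insert_erase_eq {R M : Type*} [Semiring R] [AddCommMonoid M] [Module R M]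
    [DecidableEq M] {T : Finset M} {v v' : M} (hv : v ∈ T) (hv' : v' ∈ span R (T : Set M))
    (hv_mem : v ∈ span R ↑(insert v' (T.erase v))) :
    span R ↑(insert v' (T.erase v)) = span R (T : Set M) := by
  calc span R ↑(insert v' (T.erase v)) = span R (insert v ↑(insert v' (T.erase v))) :=
        (span_insert_eq_span hv_mem).symm
    _ = span R (insert v' ↑T) := by
        rw [coe_insert, coe_erase, Set.insert_comm, Set.insert_sdiff_singleton,
          Set.insert_eq_of_mem (mem_coe.mpr hv)]
    _ = span R ↑T := span_insert_eq_span hv'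

open Module in
theorem Submodule.iterate_bot_eq_of_finrank_le {K V : Type*} [DivisionRing K] [AddCommGroup V]
    [Module K V] [FiniteDimensional K V] {f : Submodule K V → Submodule K V} (hf : Monotone f)
    {d : ℕ} (hd : finrank K V ≤ d) : f^[d] ⊥ = f^[finrank K V] ⊥ := by
  have hmono : Monotone fun k => f^[k] ⊥ := hf.monotone_iterate_of_le_map bot_le
  obtain ⟨k, hk, hfix⟩ : ∃ k ≤ finrank K V, f (f^[k] ⊥) = f^[k] ⊥ := by
    by_contra! hne
    have hgrow : ∀ k ≤ finrank K V + 1, k ≤ finrank K (f^[k] ⊥) := by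
      intro k
      induction k with
      | zero => exact fun _ => Nat.zero_le _
      | succ k ih =>
        intro hk
        have hlt : f^[k] ⊥ < f^[k + 1] ⊥ := (hmono k.le_succ).lt_of_ne <| by
          simpa only [Function.iterate_succ_apply'] using (hne k (by omega)).symm
        exact (ih (by omega)).trans_lt (Submodule.finrank_lt_finrank_of_lt hlt)
    have := (hgrow _ le_rfl).trans (Submodule.finrank_le _)
    omega
  have hconst : ∀ j, k ≤ j → f^[j] ⊥ = f^[k] ⊥ := fun j hj => by
    rw [← Nat.sub_add_cancel hj, Function.iterate_add_apply, Function.iterate_fixed hfix]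
  rw [hconst d (hk.trans hd), hconst _ hk]

namespace PolyVec

section Semiring

variable {R : Type*} [Semiring R] {κ : Type*}

def coeffVec (z : κ → R[X]) (k : ℕ) : κ → R := fun j => (z j).coeff k

@[simp]
theorem coeffVec_apply (z : κ → R[X]) (k : ℕ) (j : κ) : coeffVec z k j = (z j).coeff k := rfl

theorem ext_coeffVec {z w : κ → R[X]} (h : ∀ k, coeffVec z k = coeffVec w k) : z = w :=
  funext fun j => Polynomial.ext fun k => congr_fun (h k) j

@[simp]
theorem coeffVec_zero (k : ℕ) : coeffVec (0 : κ → R[X]) k = 0 := rfl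

@[simp]
theorem coeffVec_add (z w : κ → R[X]) (k : ℕ) :
    coeffVec (z + w) k = coeffVec z k + coeffVec w k := by
  ext; simp

theorem coeffVec_X_pow_smul (z : κ → R[X]) (n k : ℕ) :
    coeffVec ((X : R[X]) ^ n • z) k = if n ≤ k then coeffVec z (k - n) else 0 := by
  ext j
  split_ifs with h <;> simp [coeff_X_pow_mul', h]

theorem coeffVec_C (v : κ → R) (k : ℕ) :
    coeffVec (fun j => C (v j)) k = if k = 0 then v else 0 := by
  ext j
  split_ifs with h <;> simp [coeff_C, h]

theorem sum_leadingCoeff_mul_coeff_eq_zero {ι : Type*} {T : Finset ι} {v : ι → κ → R[X]}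
    {g : ι → R[X]} (hsum : ∑ i ∈ T, g i • v i = 0) {e : ι → ℕ}
    (he : ∀ i c, (v i c).natDegree ≤ e i) {M : ℕ} (hM : ∀ i ∈ T, (g i).natDegree + e i ≤ M)
    (c : κ) :
    ∑ i ∈ T with (g i).natDegree + e i = M, (g i).leadingCoeff * (v i c).coeff (e i) = 0 := by
  have hc : (∑ i ∈ T, g i * v i c).coeff M = 0 := by
    simpa using congr_arg (fun w : κ → R[X] => (w c).coeff M) hsum
  rw [finsetSum_coeff] at hc
  rw [sum_filter]
  refine (sum_congr rfl fun i hi => ?_).trans hc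
  split_ifs with h
  · rw [← h, coeff_mul_add_eq_of_natDegree_le le_rfl (he i c)]
    rfl
  · refine (coeff_eq_zero_of_natDegree_lt ?_).symm
    calc (g i * v i c).natDegree ≤ (g i).natDegree + e i :=
          natDegree_mul_le.trans (Nat.add_le_add_left (he i c) _)
      _ < M := lt_of_le_of_ne (hM i hi) h

variable [Fintype κ]

/-- The least `d` such that every entry of `v` has degree `< d`: `size 0 = 0`, and otherwise
`size v` is one more than the largest degree of an entry. -/
def size (v : κ → R[X]) : ℕ :=
  univ.sup fun c => (v c).support.sup (· + 1)

theorem size_le_iff {v : κ → R[X]} {d : ℕ} :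
    size v ≤ d ↔ ∀ c n, d ≤ n → (v c).coeff n = 0 := by
  simp only [size, Finset.sup_le_iff, mem_univ, true_implies, mem_support_iff]
  refine forall_congr' fun c => forall_congr' fun n => ?_
  exact ⟨fun h hn => by_contra fun h' => by have := h h'; omega,
    fun h h' => by_contra fun hlt => h' (h (by omega))⟩

theorem size_le_succ_iff {v : κ → R[X]} {d : ℕ} :
    size v ≤ d + 1 ↔ ∀ c, (v c).natDegree ≤ d := by
  simp only [size_le_iff, natDegree_le_iff_coeff_eq_zero]
  rfl

theorem size_eq_zero {v : κ → R[X]} : size v = 0 ↔ v = 0 := by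
  rw [← Nat.le_zero, size_le_iff]
  simp only [zero_le, true_implies, funext_iff, Pi.zero_apply, Polynomial.ext_iff, coeff_zero]

theorem natDegree_le_size_sub_one (v : κ → R[X]) (c : κ) : (v c).natDegree ≤ size v - 1 :=
  size_le_succ_iff.mp (by omega) c

theorem size_le_of_coeff_eq_zero {v : κ → R[X]} {d : ℕ} (hdeg : ∀ c, (v c).natDegree ≤ d)
    (hcoeff : ∀ c, (v c).coeff d = 0) : size v ≤ d :=
  size_le_iff.mpr fun c _ hn => (eq_or_lt_of_le hn).elim (· ▸ hcoeff c)
    fun hlt => coeff_eq_zero_of_natDegree_lt ((hdeg c).trans_lt hlt)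

theorem size_le_iff_coeffVec {z : κ → R[X]} {d : ℕ} :
    size z ≤ d ↔ ∀ n, d ≤ n → coeffVec z n = 0 := by
  simp only [size_le_iff, funext_iff, coeffVec_apply, Pi.zero_apply]
  exact ⟨fun h n hn c => h c n hn, fun h c n hn => h n hn c⟩

theorem coeffVec_eq_zero_of_size_le {z : κ → R[X]} {k : ℕ} (h : size z ≤ k) : coeffVec z k = 0 :=
  funext fun j => size_le_iff.mp h j k le_rfl

theorem size_sum_C_mul_X_pow_smul_le {ι : Type*} {L : Finset ι} {v : ι → κ → R[X]} {a : ι → R}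
    {e : ι → ℕ} {d : ℕ} (he : ∀ i c, (v i c).natDegree ≤ e i) (hed : ∀ i ∈ L, e i ≤ d)
    (hlead : ∀ c, ∑ i ∈ L, a i * (v i c).coeff (e i) = 0) :
    size (∑ i ∈ L, (C (a i) * X ^ (d - e i)) • v i) ≤ d := by
  have hdeg : ∀ i c, (C (a i) * X ^ (d - e i) * v i c).natDegree ≤ d - e i + e i := fun i c =>
    natDegree_mul_le.trans (Nat.add_le_add (natDegree_C_mul_X_pow_le _ _) (he i c))
  have hcoeff : ∀ i ∈ L, ∀ c,
      (C (a i) * X ^ (d - e i) * v i c).coeff d = a i * (v i c).coeff (e i) := fun i hi c => by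
    obtain ⟨k, rfl⟩ := Nat.exists_eq_add_of_le (hed i hi)
    rw [mul_assoc, coeff_C_mul, Nat.add_sub_cancel_left, coeff_X_pow_mul]
  refine size_le_of_coeff_eq_zero (fun c => ?_) (fun c => ?_) <;>
    simp only [Finset.sum_apply, Pi.smul_apply, smul_eq_mul]
  · exact natDegree_sum_le_of_forall_le _ _ fun i hi =>
      (hdeg i c).trans (Nat.sub_add_cancel (hed i hi)).le
  · rw [finsetSum_coeff, sum_congr rfl fun i hi => hcoeff i hi c, hlead]

variable {ι : Type*}

theorem coeffVec_mulVec_zero (B : Matrix ι κ R[X]) (z : κ → R[X]) :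
    coeffVec (B *ᵥ z) 0 = B.map (·.coeff 0) *ᵥ coeffVec z 0 := by
  ext i
  simp [Matrix.mulVec, dotProduct, finsetSum_coeff, mul_coeff_zero]

theorem coeffVec_mulVec_succ {B : Matrix ι κ R[X]} (hB : ∀ i j, (B i j).natDegree ≤ 1)
    (z : κ → R[X]) (k : ℕ) :
    coeffVec (B *ᵥ z) (k + 1) =
      B.map (·.coeff 0) *ᵥ coeffVec z (k + 1) + B.map (·.coeff 1) *ᵥ coeffVec z k := by
  ext i
  simp only [coeffVec_apply, Matrix.mulVec, dotProduct, finsetSum_coeff, Pi.add_apply,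
    Matrix.map_apply, ← sum_add_distrib]
  refine sum_congr rfl fun j _ => ?_
  rw [eq_X_add_C_of_natDegree_le_one (hB i j), add_mul, coeff_add, mul_assoc, coeff_C_mul,
    coeff_X_mul, coeff_C_mul]
  simp [coeff_C, add_comm]

end Semiring

section Field

variable {F : Type*} [Field F] {κ : Type*}

@[simp]
theorem coeffVec_sub (z w : κ → F[X]) (k : ℕ) :
    coeffVec (z - w) k = coeffVec z k - coeffVec w k := by
  ext; simp

variable [Fintype κ]

theorem exists_size_lt_of_not_linearIndepOn {T : Finset (κ → F[X])} (hT0 : (0 : κ → F[X]) ∉ T)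
    (hT : ¬LinearIndepOn F[X] id (T : Set (κ → F[X]))) :
    ∃ v ∈ T, ∃ L ⊆ T, v ∈ L ∧
      ∃ c : (κ → F[X]) → F[X], c v = 1 ∧ size (∑ w ∈ L, c w • w) < size v := by
  classical
  obtain ⟨g, hg, v₁, hv₁, hgv₁⟩ := not_linearIndepOn_finset_iff.mp hT
  set e : (κ → F[X]) → ℕ := fun w => size w - 1
  set S := T.filter (g · ≠ 0)
  have hsumS : ∑ w ∈ S, g w • id w = 0 := by
    rw [sum_filter_of_ne fun w _ hw => ?_, hg]
    rintro hgw
    rw [hgw, zero_smul] at hw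
    exact hw rfl
  obtain ⟨w₀, hw₀, hmax⟩ :=
    S.exists_max_image (fun w => (g w).natDegree + e w) ⟨v₁, mem_filter.mpr ⟨hv₁, hgv₁⟩⟩
  set L := S.filter fun w => (g w).natDegree + e w = (g w₀).natDegree + e w₀
  obtain ⟨v, hvL, hvmax⟩ := L.exists_max_image e ⟨w₀, mem_filter.mpr ⟨hw₀, rfl⟩⟩
  have hvS : v ∈ S := mem_of_mem_filter v hvL
  have hgv : (g v).leadingCoeff ≠ 0 := leadingCoeff_ne_zero.mpr (mem_filter.mp hvS).2
  refine ⟨v, mem_of_mem_filter v hvS, L, (filter_subset _ _).trans (filter_subset _ _), hvL,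
    fun w => C ((g w).leadingCoeff / (g v).leadingCoeff) * X ^ (e v - e w), by simp [hgv], ?_⟩
  have hlead := sum_leadingCoeff_mul_coeff_eq_zero hsumS (fun w => natDegree_le_size_sub_one w) hmax
  calc _ ≤ e v := size_sum_C_mul_X_pow_smul_le (fun w => natDegree_le_size_sub_one w) hvmax
        fun c => by
          rw [← zero_mul (g v).leadingCoeff⁻¹, ← hlead c, sum_mul]
          exact sum_congr rfl fun w _ => by rw [id, div_mul_eq_mul_div, div_eq_mul_inv]
    _ < size v := Nat.sub_lt (Nat.pos_of_ne_zero (size_eq_zero.not.mpr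
        (ne_of_mem_of_not_mem (mem_of_mem_filter v hvS) hT0))) one_pos

theorem exists_finset_span_eq_sum_size_lt {T : Finset (κ → F[X])} (hT0 : (0 : κ → F[X]) ∉ T)
    (hT : ¬LinearIndepOn F[X] id (T : Set (κ → F[X]))) :
    ∃ T' : Finset (κ → F[X]), (0 : κ → F[X]) ∉ T' ∧ span F[X] (T' : Set (κ → F[X])) = span F[X] T ∧
      (∀ u ∈ T', ∃ v ∈ T, size u ≤ size v) ∧ ∑ u ∈ T', size u < ∑ v ∈ T, size v := by
  classical
  obtain ⟨v, hvT, L, hLT, hvL, c, hcv, hsize⟩ := exists_size_lt_of_not_linearIndepOn hT0 hT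
  set v' := ∑ w ∈ L, c w • w with hv'
  have hv'T : v' ∈ span F[X] (T : Set (κ → F[X])) :=
    sum_mem fun w hw => smul_mem _ _ (subset_span (hLT hw))
  have hv_mem : v ∈ span F[X] ↑(insert v' (T.erase v)) := by
    have hv : v = v' - ∑ w ∈ L.erase v, c w • w := by
      rw [hv', ← add_sum_erase L _ hvL, hcv, one_smul, add_sub_cancel_right]
    have hsub : ∀ w ∈ L.erase v, c w • w ∈ span F[X] ↑(insert v' (T.erase v)) := fun w hw =>
      smul_mem _ _ (subset_span (mem_insert_of_mem (erase_subset_erase v hLT hw)))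
    have h : v' - ∑ w ∈ L.erase v, c w • w ∈ span F[X] ↑(insert v' (T.erase v)) :=
      sub_mem (subset_span (mem_insert_self _ _)) (sum_mem hsub)
    rwa [← hv] at h
  refine ⟨(insert v' (T.erase v)).erase 0, notMem_erase 0 _, ?_, fun u hu => ?_, ?_⟩
  · rw [span_erase_zero, span_insert_erase_eq hvT hv'T hv_mem]
  · rcases mem_insert.mp (mem_of_mem_erase hu) with rfl | hu
    · exact ⟨v, hvT, hsize.le⟩
    · exact ⟨u, mem_of_mem_erase hu, le_rfl⟩
  calc ∑ u ∈ (insert v' (T.erase v)).erase 0, size u ≤ ∑ u ∈ insert v' (T.erase v), size u :=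
        sum_le_sum_of_subset (erase_subset _ _)
    _ ≤ size v' + ∑ u ∈ T.erase v, size u := by
        by_cases h : v' ∈ T.erase v
        · rw [insert_eq_of_mem h]
          exact le_add_self
        · rw [sum_insert h]
    _ < size v + ∑ u ∈ T.erase v, size u := Nat.add_lt_add_right hsize _
    _ = ∑ u ∈ T, size u := add_sum_erase _ _ hvT

theorem exists_basis_of_size_le {G : Submodule F[X] (κ → F[X])} {D : ℕ} (T : Finset (κ → F[X]))
    (hT0 : (0 : κ → F[X]) ∉ T) (hT : span F[X] (T : Set (κ → F[X])) = G)
    (hD : ∀ v ∈ T, size v ≤ D) :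
    ∃ (ν : ℕ) (b : Module.Basis (Fin ν) F[X] G), ∀ j, size (b j : κ → F[X]) ≤ D := by
  induction hw : ∑ v ∈ T, size v using Nat.strong_induction_on generalizing T with
  | _ w ih =>
  by_cases hli : LinearIndepOn F[X] id (T : Set (κ → F[X]))
  · obtain ⟨ν, b, hb⟩ := exists_finBasis_of_linearIndepOn hli hT
    exact ⟨ν, b, fun j => hD _ (hb j)⟩
  obtain ⟨T', hT'0, hT'span, hT'size, hlt⟩ := exists_finset_span_eq_sum_size_lt hT0 hli
  refine ih _ (hw ▸ hlt) T' hT'0 (hT'span.trans hT) (fun u hu => ?_) rfl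
  obtain ⟨v, hv, hle⟩ := hT'size u hu
  exact hle.trans (hD v hv)

theorem exists_basis_natDegree_le {G : Submodule F[X] (κ → F[X])} {S : Set (κ → F[X])}
    (hS : span F[X] S = G) {D : ℕ} (hdeg : ∀ v ∈ S, ∀ c, (v c).natDegree ≤ D) :
    ∃ (ν : ℕ) (b : Module.Basis (Fin ν) F[X] G), ∀ j c, ((b j : κ → F[X]) c).natDegree ≤ D := by
  classical
  obtain ⟨T, hTS, hT⟩ :=
    (fg_span_iff_fg_span_finset_subset S).mp (hS ▸ IsNoetherian.noetherian G)
  obtain ⟨ν, b, hb⟩ := exists_basis_of_size_le (T.erase 0) (notMem_erase 0 T)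
    (by rw [span_erase_zero, ← hT, hS])
    fun v hv => size_le_succ_iff.mpr (hdeg v (hTS (mem_of_mem_erase hv)))
  exact ⟨ν, b, fun j => size_le_succ_iff.mp (hb j)⟩

variable {ι : Type*}

def wongStep (A₀ A₁ : Matrix ι κ F) (U : Submodule F (κ → F)) : Submodule F (κ → F) :=
  (U.map (-A₁).mulVecLin).comap A₀.mulVecLin

theorem mem_wongStep {A₀ A₁ : Matrix ι κ F} {U : Submodule F (κ → F)} {v : κ → F} :
    v ∈ wongStep A₀ A₁ U ↔ ∃ u ∈ U, A₀ *ᵥ v + A₁ *ᵥ u = 0 := by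
  simp only [wongStep, mem_comap, Submodule.mem_map]
  exact exists_congr fun u => and_congr_right fun _ => by
    rw [mulVecLin_apply, neg_mulVec]
    exact add_eq_zero_iff_neg_eq'.symm

theorem monotone_wongStep (A₀ A₁ : Matrix ι κ F) : Monotone (wongStep A₀ A₁) :=
  fun _ _ h => comap_mono (map_mono h)

section Pencil

variable {B : Matrix ι κ F[X]}

theorem coeffVec_mem_iterate_wongStep (hB : ∀ i j, (B i j).natDegree ≤ 1) {z : κ → F[X]}
    (hz : B *ᵥ z = 0) (k : ℕ) :
    coeffVec z k ∈ (wongStep (B.map (·.coeff 0)) (B.map (·.coeff 1)))^[k + 1] ⊥ := by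
  induction k with
  | zero =>
    refine mem_wongStep.mpr ⟨0, zero_mem _, ?_⟩
    rw [mulVec_zero, add_zero, ← coeffVec_mulVec_zero, hz, coeffVec_zero]
  | succ k ih =>
    rw [Function.iterate_succ_apply', mem_wongStep]
    exact ⟨_, ih, by rw [← coeffVec_mulVec_succ hB, hz, coeffVec_zero]⟩

theorem exists_coeffVec_eq_of_mem_iterate_wongStep (hB : ∀ i j, (B i j).natDegree ≤ 1) {k : ℕ}
    {v : κ → F} (hv : v ∈ (wongStep (B.map (·.coeff 0)) (B.map (·.coeff 1)))^[k + 1] ⊥) :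
    ∃ y : κ → F[X], size y ≤ k + 1 ∧ coeffVec y k = v ∧ ∀ e ≤ k, coeffVec (B *ᵥ y) e = 0 := by
  induction k generalizing v with
  | zero =>
    obtain ⟨u, hu, huv⟩ := mem_wongStep.mp hv
    rw [mem_bot] at hu
    have hv0 : coeffVec (fun j => C (v j)) 0 = v := by rw [coeffVec_C, if_pos rfl]
    refine ⟨fun j => C (v j), size_le_succ_iff.mpr fun j => (natDegree_C _).le, hv0,
      fun e he => ?_⟩
    rw [Nat.le_zero.mp he, coeffVec_mulVec_zero, hv0]
    simpa [hu] using huv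
  | succ k ih =>
    rw [Function.iterate_succ_apply', mem_wongStep] at hv
    obtain ⟨u, hu, huv⟩ := hv
    obtain ⟨y, hys, hyk, hyB⟩ := ih hu
    have hcoeff : ∀ e, coeffVec (y + (X : F[X]) ^ (k + 1) • fun j => C (v j)) e =
        coeffVec y e + if e = k + 1 then v else 0 := fun e => by
      rw [coeffVec_add, coeffVec_X_pow_smul, coeffVec_C]
      congr 1
      split_ifs <;> first | rfl | omega
    refine ⟨y + (X : F[X]) ^ (k + 1) • fun j => C (v j),
      size_le_iff_coeffVec.mpr fun n hn => ?_, ?_, fun e he => ?_⟩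
    · rw [hcoeff, if_neg (by omega), coeffVec_eq_zero_of_size_le (by omega), add_zero]
    · rw [hcoeff, if_pos rfl, coeffVec_eq_zero_of_size_le hys, zero_add]
    · rcases Nat.lt_or_eq_of_le he with he | rfl
      · rw [mulVec_add, mulVec_smul, coeffVec_add, coeffVec_X_pow_smul, if_neg (by omega),
          add_zero, hyB e (by omega)]
      · rw [coeffVec_mulVec_succ hB, hcoeff, hcoeff, if_pos rfl, if_neg (by omega), add_zero,
          coeffVec_eq_zero_of_size_le hys, zero_add, hyk, huv]

theorem exists_mulVec_eq_zero_of_mem_iterate_wongStep (hB : ∀ i j, (B i j).natDegree ≤ 1)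
    {k : ℕ} {v : κ → F} (hv : v ∈ (wongStep (B.map (·.coeff 0)) (B.map (·.coeff 1)))^[k + 1] ⊥)
    (hv₁ : B.map (·.coeff 1) *ᵥ v = 0) :
    ∃ y : κ → F[X], B *ᵥ y = 0 ∧ size y ≤ k + 1 ∧ coeffVec y k = v := by
  obtain ⟨y, hys, hyk, hyB⟩ := exists_coeffVec_eq_of_mem_iterate_wongStep hB hv
  refine ⟨y, ext_coeffVec fun e => ?_, hys, hyk⟩
  rw [coeffVec_zero]
  rcases le_or_gt e k with he | he
  · exact hyB e he
  obtain ⟨e, rfl⟩ := Nat.exists_eq_add_of_lt he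
  rw [coeffVec_mulVec_succ hB, coeffVec_eq_zero_of_size_le (by omega), mulVec_zero, zero_add]
  rcases e with _ | e
  · rw [add_zero, hyk, hv₁]
  · rw [coeffVec_eq_zero_of_size_le (by omega), mulVec_zero]

theorem exists_mulVec_eq_zero_coeffVec_eq (hB : ∀ i j, (B i j).natDegree ≤ 1) {z : κ → F[X]}
    (hz : B *ᵥ z = 0) {d : ℕ} (hzd : size z ≤ d + 1) (hd : Fintype.card κ ≤ d) :
    ∃ y : κ → F[X], B *ᵥ y = 0 ∧ size y ≤ Fintype.card κ + 1 ∧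
      coeffVec y (Fintype.card κ) = coeffVec z d := by
  have hstab : ∀ {j}, Fintype.card κ ≤ j →
      (wongStep (B.map (·.coeff 0)) (B.map (·.coeff 1)))^[j] ⊥ =
        (wongStep (B.map (·.coeff 0)) (B.map (·.coeff 1)))^[Fintype.card κ] ⊥ := fun hj => by
    rw [iterate_bot_eq_of_finrank_le (monotone_wongStep _ _)
      (by rwa [Module.finrank_fintype_fun_eq_card]), Module.finrank_fintype_fun_eq_card]
  refine exists_mulVec_eq_zero_of_mem_iterate_wongStep hB ?_ ?_
  · rw [hstab (Nat.le_succ _), ← hstab (hd.trans (Nat.le_succ _))]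
    exact coeffVec_mem_iterate_wongStep hB hz d
  · have h := coeffVec_mulVec_succ hB z d
    rwa [hz, coeffVec_zero, coeffVec_eq_zero_of_size_le hzd, mulVec_zero, zero_add, eq_comm] at h

theorem mem_span_of_mulVec_eq_zero (hB : ∀ i j, (B i j).natDegree ≤ 1) {z : κ → F[X]}
    (hz : B *ᵥ z = 0) :
    z ∈ span F[X] {y | B *ᵥ y = 0 ∧ ∀ j, (y j).natDegree ≤ Fintype.card κ} := by
  set N := Fintype.card κ
  suffices ∀ d (z : κ → F[X]), B *ᵥ z = 0 → size z ≤ d →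
      z ∈ span F[X] {y | B *ᵥ y = 0 ∧ ∀ j, (y j).natDegree ≤ N} from this _ z hz le_rfl
  intro d
  induction d with
  | zero =>
    intro z _ hz0
    rw [size_eq_zero.mp (Nat.le_zero.mp hz0)]
    exact zero_mem _
  | succ d ih =>
    intro z hz hzd
    by_cases hsmall : size z ≤ N + 1
    · exact subset_span ⟨hz, size_le_succ_iff.mp hsmall⟩
    obtain ⟨y, hyB, hys, hyN⟩ := exists_mulVec_eq_zero_coeffVec_eq hB hz hzd (by omega)
    have hrest : size (z - (X : F[X]) ^ (d - N) • y) ≤ d := size_le_iff_coeffVec.mpr fun n hn => by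
      rw [coeffVec_sub, coeffVec_X_pow_smul, if_pos (by omega)]
      rcases Nat.lt_or_eq_of_le hn with hn | rfl
      · rw [coeffVec_eq_zero_of_size_le (by omega),
          coeffVec_eq_zero_of_size_le (hys.trans (by omega)), sub_zero]
      · rw [Nat.sub_sub_self (by omega), hyN, sub_self]
    have hmem := ih _ (by rw [mulVec_sub, mulVec_smul, hz, hyB, smul_zero, sub_zero]) hrest
    rw [← sub_add_cancel z ((X : F[X]) ^ (d - N) • y)]
    exact add_mem hmem (smul_mem _ _ (subset_span ⟨hyB, size_le_succ_iff.mp hys⟩))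

end Pencil

end Field

end PolyVec

/-- Assembly of the proof of the main theorem (Section 3.3 of the paper). Let
`B` be an `m × n` matrix over `𝔽q[t]` with entries of degree at most `1` and of
full rank `m` over `𝔽q(t)`, and let `G ⊆ (𝔽q[t])^ℓ` be the projection of the
kernel `{x ∈ (𝔽q[t])^n : Bxᵀ = 0}` onto the last `ℓ` coordinates. Then `G`
admits an `𝔽q[t]`-basis whose elements have degree at most `n`. -/
theorem projected_kernel_bounded_degree_basis
    (Fq : Type*) [Field Fq]
    (m n ℓ : ℕ) (hℓ : ℓ ≤ n)
    (B : Matrix (Fin m) (Fin n) (Polynomial Fq))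
    (hdeg : ∀ i j, (B i j).natDegree ≤ 1)
    (G : Submodule (Polynomial Fq) (Fin ℓ → Polynomial Fq))
    (hG : ∀ y : Fin ℓ → Polynomial Fq, y ∈ G ↔
      ∃ x : Fin n → Polynomial Fq, B.mulVec x = 0 ∧
        ∀ i : Fin ℓ, y i = x ⟨n - ℓ + i.1, by have := i.2; omega⟩) :
    ∃ (ν : ℕ) (mb : Module.Basis (Fin ν) (Polynomial Fq) G),
      ∀ j c, (((mb j : Fin ℓ → Polynomial Fq)) c).natDegree ≤ n := by
  let π := LinearMap.funLeft Fq[X] Fq[X] fun i : Fin ℓ => (⟨n - ℓ + i.1, by omega⟩ : Fin n)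
  let K := {x : Fin n → Fq[X] | B *ᵥ x = 0 ∧ ∀ j, (x j).natDegree ≤ n}
  have hG_map : G = (LinearMap.ker B.mulVecLin).map π := by
    ext y
    simp only [hG, Submodule.mem_map, LinearMap.mem_ker, mulVecLin_apply, funext_iff,
      LinearMap.funLeft_apply, π]
    exact exists_congr fun x => and_congr_right fun _ => forall_congr' fun i => eq_comm
  have hker : LinearMap.ker B.mulVecLin = span Fq[X] K :=
    le_antisymm (fun x hx => by simpa using PolyVec.mem_span_of_mulVec_eq_zero hdeg hx)
      (span_le.mpr fun x hx => hx.1)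
  refine PolyVec.exists_basis_natDegree_le (S := π '' K) ?_ ?_
  · rw [← map_span, ← hker, hG_map]
  · rintro _ ⟨x, hx, rfl⟩ c
    exact hx.2 _
end
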